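/- arXiv:2306.13795 — 2 statements merged into one kernel-verified Lean document; each statement's English description precedes it below -/
import Mathlib

section
/- Let 2 ≤ q < ∞ and 2 ≤ σ < ∞. There exists a constant c(q,σ) > 0 depending only on q and σ such that for all m, k, r, l ∈ ℕ with 1 ≤ r ≤ m and 1 ≤ l ≤ k, and all n ∈ ℤ_+ with n ≤ mk/2, the Kolmogorov width of the set V^{m,k}_{r,l} in l^{m,k}_{q,σ} satisfies: d_n(V^{m,k}_{r,l}, l^{m,k}_{q,σ}) ≥ c(q,σ) · r^{1/q} l^{1/σ} if n ≤ m^{2/q} k^{2/σ} r^{1−2/q} l^{1−2/σ}, and d_n(V^{m,k}_{r,l}, l^{m,k}_{q,σ}) ≥ c(q,σ) · n^{−1/2} m^{1/q} k^{1/σ} r^{1/2} l^{1/2} if n ≥ m^{2/q} k^{2/σ} r^{1−2/q} l^{1−2/σ}. -/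
open scoped ENNReal NNReal BigOperators Pointwise

noncomputable section

def lNorm (s : ℝ≥0∞) {ι : Type*} [Fintype ι] (x : ι → ℝ) : ℝ :=
  if s = ∞ then ⨆ i, |x i| else (∑ i, |x i| ^ s.toReal) ^ (1 / s.toReal)

def mixedNorm (p θ : ℝ≥0∞) {m k : ℕ} (x : Fin m → Fin k → ℝ) : ℝ :=
  lNorm θ fun j => lNorm p fun i => x i j

def mixedBall (m k : ℕ) (p θ : ℝ≥0∞) : Set (Fin m → Fin k → ℝ) :=
  {x | mixedNorm p θ x ≤ 1}

def kolWidth (m k n : ℕ) (M : Set (Fin m → Fin k → ℝ)) (q σ : ℝ≥0∞) : ℝ :=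
  ⨅ L : {L : Submodule ℝ (Fin m → Fin k → ℝ) // Module.finrank ℝ L ≤ n},
    ⨆ x : M, ⨅ y : L.1,
      mixedNorm q σ ((x : Fin m → Fin k → ℝ) - (y : Fin m → Fin k → ℝ))

def ir (p : ℝ≥0∞) : ℝ := p⁻¹.toReal

def omegaE (p q : ℝ≥0∞) : ℝ :=
  if q = 2 then 1 else min ((ir p - ir q) / (1 / 2 - ir q)) 1

def expOf (t : ℝ) : ℝ≥0∞ := (ENNReal.ofReal t)⁻¹

def Phi (q σ : ℝ≥0∞) (m k n : ℕ) (p θ : ℝ≥0∞) : ℝ≥0∞ :=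
  let M : ℝ≥0∞ := m
  let K : ℝ≥0∞ := k
  let W : ℝ≥0∞ := ((n : ℝ≥0∞))⁻¹ ^ ((1 : ℝ) / 2) * M ^ ir q * K ^ ir σ
  let Wm : ℝ≥0∞ := ((n : ℝ≥0∞))⁻¹ ^ ((1 : ℝ) / 2) * M ^ ((1 : ℝ) / 2) * K ^ ir σ
  let Wk : ℝ≥0∞ := ((n : ℝ≥0∞))⁻¹ ^ ((1 : ℝ) / 2) * M ^ ir q * K ^ ((1 : ℝ) / 2)
  if q ≤ p then
    if σ ≤ θ then
      M ^ (ir q - ir p) * K ^ (ir σ - ir θ)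
    else
      min (M ^ (ir q - ir p)) (M ^ (ir q - ir p) * Wm ^ omegaE θ σ)
  else if σ ≤ θ then
    min (K ^ (ir σ - ir θ)) (K ^ (ir σ - ir θ) * Wk ^ omegaE p q)
  else if p ≤ 2 ∧ θ ≤ 2 then
    min 1 W
  else if omegaE p q ≤ omegaE θ σ then
    min (min 1 (W ^ omegaE p q)) (M ^ (ir q - ir p) * Wm ^ omegaE θ σ)
  else
    min (min 1 (W ^ omegaE θ σ)) (K ^ (ir σ - ir θ) * Wk ^ omegaE p q)

/-- `Ψ₀ = inf_{α ∈ A} ν_α Φ(p_α, θ_α)`. -/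
def Psi0 {A : Type*} (q σ : ℝ≥0∞) (m k n : ℕ) (p θ : A → ℝ≥0∞) (ν : A → ℝ) : ℝ≥0∞ :=
  ⨅ a : A, ENNReal.ofReal (ν a) * Phi q σ m k n (p a) (θ a)

/-- `Ψ₁`: infimum over pairs `(α, β) ∈ N₁`, i.e. `p_α ≠ q` and
`1/q = (1−λ)/p_α + λ/p_β` for some `λ ∈ (0,1)`, of
`ν_α^{1−λ} ν_β^{λ} Φ(q, θ̂_{α,β})` where `1/θ̂_{α,β} = (1−λ)/θ_α + λ/θ_β`. -/
def Psi1 {A : Type*} (q σ : ℝ≥0∞) (m k n : ℕ) (p θ : A → ℝ≥0∞) (ν : A → ℝ) : ℝ≥0∞ :=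
  ⨅ (a : A) (b : A) (lam : ℝ)
    (_ : 0 < lam ∧ lam < 1 ∧ p a ≠ q ∧
      ir q = (1 - lam) * ir (p a) + lam * ir (p b)),
    ENNReal.ofReal (ν a) ^ (1 - lam) * ENNReal.ofReal (ν b) ^ lam *
      Phi q σ m k n q (expOf ((1 - lam) * ir (θ a) + lam * ir (θ b)))

/-- `Ψ₂`: infimum over `(α, β) ∈ N₂` of `ν_α^{1−μ} ν_β^{μ} Φ(p̂_{α,β}, σ)`. -/
def Psi2 {A : Type*} (q σ : ℝ≥0∞) (m k n : ℕ) (p θ : A → ℝ≥0∞) (ν : A → ℝ) : ℝ≥0∞ :=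
  ⨅ (a : A) (b : A) (lam : ℝ)
    (_ : 0 < lam ∧ lam < 1 ∧ θ a ≠ σ ∧
      ir σ = (1 - lam) * ir (θ a) + lam * ir (θ b)),
    ENNReal.ofReal (ν a) ^ (1 - lam) * ENNReal.ofReal (ν b) ^ lam *
      Phi q σ m k n (expOf ((1 - lam) * ir (p a) + lam * ir (p b))) σ

/-- `Ψ₃`: infimum over `(α, β) ∈ N₃` of `ν_α^{1−λ} ν_β^{λ} Φ(2, θ̃_{α,β})`. -/
def Psi3 {A : Type*} (q σ : ℝ≥0∞) (m k n : ℕ) (p θ : A → ℝ≥0∞) (ν : A → ℝ) : ℝ≥0∞ :=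
  ⨅ (a : A) (b : A) (lam : ℝ)
    (_ : 0 < lam ∧ lam < 1 ∧ p a ≠ 2 ∧
      (1 : ℝ) / 2 = (1 - lam) * ir (p a) + lam * ir (p b)),
    ENNReal.ofReal (ν a) ^ (1 - lam) * ENNReal.ofReal (ν b) ^ lam *
      Phi q σ m k n 2 (expOf ((1 - lam) * ir (θ a) + lam * ir (θ b)))

/-- `Ψ₄`: infimum over `(α, β) ∈ N₄` of `ν_α^{1−μ} ν_β^{μ} Φ(p̃_{α,β}, 2)`. -/
def Psi4 {A : Type*} (q σ : ℝ≥0∞) (m k n : ℕ) (p θ : A → ℝ≥0∞) (ν : A → ℝ) : ℝ≥0∞ :=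
  ⨅ (a : A) (b : A) (lam : ℝ)
    (_ : 0 < lam ∧ lam < 1 ∧ θ a ≠ 2 ∧
      (1 : ℝ) / 2 = (1 - lam) * ir (θ a) + lam * ir (θ b)),
    ENNReal.ofReal (ν a) ^ (1 - lam) * ENNReal.ofReal (ν b) ^ lam *
      Phi q σ m k n (expOf ((1 - lam) * ir (p a) + lam * ir (p b))) 2

/-- `Ψ₅`: infimum over `(α, β) ∈ N₅`, i.e. such that for some `λ ∈ (0,1)` the
interpolated exponents satisfy `p_{α,β} ∈ (2,q)`, `θ_{α,β} ∈ (2,σ)`, lie on the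
"critical line", while `(1/p_α, 1/θ_α)` does not, of
`ν_α^{1−λ} ν_β^{λ} Φ(p_{α,β}, θ_{α,β})`. -/
def Psi5 {A : Type*} (q σ : ℝ≥0∞) (m k n : ℕ) (p θ : A → ℝ≥0∞) (ν : A → ℝ) : ℝ≥0∞ :=
  ⨅ (a : A) (b : A) (lam : ℝ)
    (_ : 0 < lam ∧ lam < 1 ∧
      ir q < (1 - lam) * ir (p a) + lam * ir (p b) ∧
      (1 - lam) * ir (p a) + lam * ir (p b) < 1 / 2 ∧
      ir σ < (1 - lam) * ir (θ a) + lam * ir (θ b) ∧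
      (1 - lam) * ir (θ a) + lam * ir (θ b) < 1 / 2 ∧
      ((1 - lam) * ir (p a) + lam * ir (p b) - ir q) / (1 / 2 - ir q) =
        ((1 - lam) * ir (θ a) + lam * ir (θ b) - ir σ) / (1 / 2 - ir σ) ∧
      (ir (p a) - ir q) / (1 / 2 - ir q) ≠ (ir (θ a) - ir σ) / (1 / 2 - ir σ)),
    ENNReal.ofReal (ν a) ^ (1 - lam) * ENNReal.ofReal (ν b) ^ lam *
      Phi q σ m k n (expOf ((1 - lam) * ir (p a) + lam * ir (p b)))
        (expOf ((1 - lam) * ir (θ a) + lam * ir (θ b)))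

/-- `Ψ₆`: infimum over triples `(α, β, γ) ∈ N₆` (with positive weights `τ` summing to `1`
interpolating `(1/q, 1/σ)`, the three points not collinear) of
`ν_α^{τ_α} ν_β^{τ_β} ν_γ^{τ_γ} Φ(q, σ)`. -/
def Psi6 {A : Type*} (q σ : ℝ≥0∞) (m k n : ℕ) (p θ : A → ℝ≥0∞) (ν : A → ℝ) : ℝ≥0∞ :=
  ⨅ (a : A) (b : A) (c : A) (ta : ℝ) (tb : ℝ) (tc : ℝ)
    (_ : 0 < ta ∧ 0 < tb ∧ 0 < tc ∧ ta + tb + tc = 1 ∧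
      ir q = ta * ir (p a) + tb * ir (p b) + tc * ir (p c) ∧
      ir σ = ta * ir (θ a) + tb * ir (θ b) + tc * ir (θ c) ∧
      (ir (p b) - ir (p a)) * (ir (θ c) - ir (θ a)) ≠
        (ir (p c) - ir (p a)) * (ir (θ b) - ir (θ a))),
    ENNReal.ofReal (ν a) ^ ta * ENNReal.ofReal (ν b) ^ tb * ENNReal.ofReal (ν c) ^ tc *
      Phi q σ m k n q σ

/-- `Ψ₇`: as `Ψ₆`, with `(1/2, 1/2)` in place of `(1/q, 1/σ)`. -/
def Psi7 {A : Type*} (q σ : ℝ≥0∞) (m k n : ℕ) (p θ : A → ℝ≥0∞) (ν : A → ℝ) : ℝ≥0∞ :=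
  ⨅ (a : A) (b : A) (c : A) (ta : ℝ) (tb : ℝ) (tc : ℝ)
    (_ : 0 < ta ∧ 0 < tb ∧ 0 < tc ∧ ta + tb + tc = 1 ∧
      (1 : ℝ) / 2 = ta * ir (p a) + tb * ir (p b) + tc * ir (p c) ∧
      (1 : ℝ) / 2 = ta * ir (θ a) + tb * ir (θ b) + tc * ir (θ c) ∧
      (ir (p b) - ir (p a)) * (ir (θ c) - ir (θ a)) ≠
        (ir (p c) - ir (p a)) * (ir (θ b) - ir (θ a))),
    ENNReal.ofReal (ν a) ^ ta * ENNReal.ofReal (ν b) ^ tb * ENNReal.ofReal (ν c) ^ tc *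
      Phi q σ m k n 2 2

/-- `min_{0 ≤ j ≤ 7} Ψ_j`. -/
def PsiMin {A : Type*} (q σ : ℝ≥0∞) (m k n : ℕ) (p θ : A → ℝ≥0∞) (ν : A → ℝ) : ℝ≥0∞ :=
  Psi0 q σ m k n p θ ν ⊓ Psi1 q σ m k n p θ ν ⊓ Psi2 q σ m k n p θ ν ⊓
    Psi3 q σ m k n p θ ν ⊓ Psi4 q σ m k n p θ ν ⊓ Psi5 q σ m k n p θ ν ⊓
    Psi6 q σ m k n p θ ν ⊓ Psi7 q σ m k n p θ ν

/-- The set `V^{m,k}_{r,l}`: the convex hull of all `γ(e)`, where `e` is the 0/1 matrix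
supported on the first `r` rows and first `l` columns and `γ` ranges over all
permutations of rows/columns composed with sign changes of rows/columns. -/
def Vset (m k r l : ℕ) : Set (Fin m → Fin k → ℝ) :=
  convexHull ℝ {y | ∃ (t₁ : Equiv.Perm (Fin m)) (t₂ : Equiv.Perm (Fin k))
      (e₁ : Fin m → ℝ) (e₂ : Fin k → ℝ),
    (∀ i, e₁ i = 1 ∨ e₁ i = -1) ∧ (∀ j, e₂ j = 1 ∨ e₂ j = -1) ∧
    y = fun i j => e₁ i * e₂ j * (if (t₁ i : ℕ) < r ∧ (t₂ j : ℕ) < l then 1 else 0)}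


namespace Stmt3Aux

/-- `ℓ_p` "norm" with real exponent. -/
def np {ι : Type*} [Fintype ι] (p : ℝ) (x : ι → ℝ) : ℝ :=
  (∑ i, |x i| ^ p) ^ (1 / p)

variable {ι : Type*} [Fintype ι]

lemma np_sum_nonneg (p : ℝ) (x : ι → ℝ) : 0 ≤ ∑ i, |x i| ^ p :=
  Finset.sum_nonneg fun i _ => Real.rpow_nonneg (abs_nonneg _) _

lemma np_nonneg (p : ℝ) (x : ι → ℝ) : 0 ≤ np p x :=
  Real.rpow_nonneg (np_sum_nonneg p x) _

lemma np_mono {p : ℝ} (hp : 0 < p) {x y : ι → ℝ} (h : ∀ i, |x i| ≤ |y i|) :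
    np p x ≤ np p y := by
  unfold np
  apply Real.rpow_le_rpow (np_sum_nonneg p x)
  · exact Finset.sum_le_sum fun i _ => Real.rpow_le_rpow (abs_nonneg _) (h i) hp.le
  · positivity

lemma np_smul {p : ℝ} (hp : 0 < p) (a : ℝ) (ha : 0 ≤ a) (x : ι → ℝ) :
    np p (fun i => a * x i) = a * np p x := by
  unfold np
  have h1 : ∀ i, |a * x i| ^ p = a ^ p * |x i| ^ p := by
    intro i
    rw [abs_mul, abs_of_nonneg ha, Real.mul_rpow ha (abs_nonneg _)]
  simp only [h1, ← Finset.mul_sum]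
  rw [Real.mul_rpow (Real.rpow_nonneg ha p) (np_sum_nonneg p x),
    ← Real.rpow_mul ha, mul_one_div, div_self hp.ne', Real.rpow_one]

lemma np_neg (p : ℝ) (x : ι → ℝ) : np p (fun i => - x i) = np p x := by
  simp [np]

lemma np_holder {p p' : ℝ} (hpq : Real.HolderConjugate p p') (x y : ι → ℝ) :
    ∑ i, x i * y i ≤ np p x * np p' y :=
  Real.inner_le_Lp_mul_Lq Finset.univ x y hpq

lemma np_add_le {p : ℝ} (hp : 1 ≤ p) (x y : ι → ℝ) :
    np p (fun i => x i + y i) ≤ np p x + np p y :=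
  Real.Lp_add_le Finset.univ x y hp

lemma np_sub_le {p : ℝ} (hp : 1 ≤ p) (x y : ι → ℝ) :
    np p (fun i => x i - y i) ≤ np p x + np p y := by
  have := np_add_le hp x (fun i => - y i)
  simpa [np_neg, sub_eq_add_neg] using this

/-- comparison with the Euclidean norm for `1 ≤ p ≤ 2`. -/
lemma np_le_np2 {p : ℝ} (hp1 : 1 ≤ p) (hp2 : p ≤ 2) (x : ι → ℝ) :
    np p x ≤ (Fintype.card ι : ℝ) ^ (1 / p - 1 / 2) * np 2 x := by
  rcases eq_or_lt_of_le hp2 with h2 | h2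
  · subst h2; simp [np]
  · -- p < 2 : Hölder with exponents 2/p and its conjugate
    have hppos : 0 < p := lt_of_lt_of_le zero_lt_one hp1
    have hconj : Real.HolderConjugate (2 / p) (2 / (2 - p)) := by
      refine ⟨?_, by positivity, div_pos two_pos (by linarith)⟩
      rw [inv_div, inv_div, inv_one, ← add_div]; ring
    have key := Real.inner_le_Lp_mul_Lq Finset.univ (fun i => |x i| ^ p)
      (fun _ => (1 : ℝ)) hconj
    simp only [mul_one, abs_one, Real.one_rpow, Finset.sum_const, Finset.card_univ,
      nsmul_eq_mul, mul_one] at key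
    have habs : ∀ i : ι, (abs (|x i| ^ p)) ^ (2 / p) = |x i| ^ (2 : ℝ) := by
      intro i
      rw [abs_of_nonneg (Real.rpow_nonneg (abs_nonneg _) _), ← Real.rpow_mul (abs_nonneg _)]
      rw [mul_div_cancel₀ _ hppos.ne']
    simp only [habs] at key
    -- key : ∑ |x i|^p ≤ (∑ |x i|^2) ^ (p/2) * card ^ ((2-p)/2)
    unfold np
    calc (∑ i, |x i| ^ p) ^ (1 / p)
        ≤ (((∑ i, |x i| ^ (2:ℝ)) ^ (1 / (2 / p))) * ((Fintype.card ι : ℝ) ^ (1 / (2 / (2 - p))))) ^ (1/p) := by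
          apply Real.rpow_le_rpow (np_sum_nonneg p x) key (by positivity)
      _ = (Fintype.card ι : ℝ) ^ (1 / p - 1 / 2) * (∑ i, |x i| ^ (2:ℝ)) ^ (1 / (2:ℝ)) := by
          rw [Real.mul_rpow (Real.rpow_nonneg (np_sum_nonneg 2 x) _) (Real.rpow_nonneg (Nat.cast_nonneg _) _),
            ← Real.rpow_mul (np_sum_nonneg 2 x), ← Real.rpow_mul (Nat.cast_nonneg _)]
          rw [mul_comm]
          congr 1
          · congr 1
            field_simp
            try ring
            try (left; ring)
          · congr 1
            field_simp
            try ring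
            try (left; ring)

/-! ### Bilinear form and mixed norms -/

def Bf {m k : ℕ} (x y : Fin m → Fin k → ℝ) : ℝ := ∑ i, ∑ j, x i j * y i j

variable {m k : ℕ}

lemma Bf_comm (x y : Fin m → Fin k → ℝ) : Bf x y = Bf y x := by
  simp [Bf, mul_comm]

lemma Bf_self_nonneg (x : Fin m → Fin k → ℝ) : 0 ≤ Bf x x :=
  Finset.sum_nonneg fun i _ => Finset.sum_nonneg fun j _ => mul_self_nonneg _

lemma Bf_sub_left (x y z : Fin m → Fin k → ℝ) : Bf (x - y) z = Bf x z - Bf y z := by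
  simp [Bf, sub_mul, Finset.sum_sub_distrib]

lemma Bf_sub_right (x y z : Fin m → Fin k → ℝ) : Bf z (x - y) = Bf z x - Bf z y := by
  rw [Bf_comm, Bf_sub_left, Bf_comm x z, Bf_comm y z]

lemma Bf_sum_left {A : Type*} (F : Finset A) (g : A → (Fin m → Fin k → ℝ))
    (z : Fin m → Fin k → ℝ) : Bf (∑ s ∈ F, g s) z = ∑ s ∈ F, Bf (g s) z := by
  unfold Bf
  simp only [Finset.sum_apply, Finset.sum_mul]
  calc ∑ i, ∑ j, ∑ s ∈ F, g s i j * z i j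
      = ∑ i, ∑ s ∈ F, ∑ j, g s i j * z i j := by
        refine Finset.sum_congr rfl fun i _ => ?_
        exact Finset.sum_comm
    _ = ∑ s ∈ F, ∑ i, ∑ j, g s i j * z i j := Finset.sum_comm

lemma Bf_sum_right {A : Type*} (F : Finset A) (g : A → (Fin m → Fin k → ℝ))
    (z : Fin m → Fin k → ℝ) : Bf z (∑ s ∈ F, g s) = ∑ s ∈ F, Bf z (g s) := by
  rw [Bf_comm, Bf_sum_left]
  exact Finset.sum_congr rfl fun s _ => Bf_comm _ _

lemma Bf_smul_left (c : ℝ) (x z : Fin m → Fin k → ℝ) : Bf (c • x) z = c * Bf x z := by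
  simp [Bf, Finset.mul_sum, mul_assoc]

lemma Bf_smul_right (c : ℝ) (x z : Fin m → Fin k → ℝ) : Bf z (c • x) = c * Bf z x := by
  rw [Bf_comm, Bf_smul_left, Bf_comm]

/-- mixed norm with real exponents -/
def mnp (a b : ℝ) (z : Fin m → Fin k → ℝ) : ℝ := np b (fun j => np a (fun i => z i j))

lemma mnp_nonneg (a b : ℝ) (z : Fin m → Fin k → ℝ) : 0 ≤ mnp a b z := np_nonneg _ _

lemma mnp_holder {a a' b b' : ℝ} (ha : Real.HolderConjugate a a') (hb : Real.HolderConjugate b b')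
    (z w : Fin m → Fin k → ℝ) : Bf z w ≤ mnp a b z * mnp a' b' w := by
  have step1 : Bf z w = ∑ j, ∑ i, z i j * w i j := by
    rw [Bf]; exact Finset.sum_comm
  rw [step1]
  calc ∑ j, ∑ i, z i j * w i j
      ≤ ∑ j, (np a fun i => z i j) * (np a' fun i => w i j) :=
        Finset.sum_le_sum fun j _ => np_holder ha _ _
    _ ≤ mnp a b z * mnp a' b' w := np_holder hb _ _

lemma mnp_sub_le {a b : ℝ} (ha : 1 ≤ a) (hb : 1 ≤ b) (z w : Fin m → Fin k → ℝ) :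
    mnp a b (z - w) ≤ mnp a b z + mnp a b w := by
  have hsub : ∀ j, (np a fun i => (z - w) i j) ≤ (np a fun i => z i j) + (np a fun i => w i j) := by
    intro j
    have := np_sub_le ha (fun i => z i j) (fun i => w i j)
    simpa using this
  calc mnp a b (z - w)
      ≤ np b (fun j => (np a fun i => z i j) + (np a fun i => w i j)) := by
        apply np_mono (lt_of_lt_of_le zero_lt_one hb)
        intro j
        rw [abs_of_nonneg (np_nonneg _ _), abs_of_nonneg
          (add_nonneg (np_nonneg _ _) (np_nonneg _ _))]
        exact hsub j
    _ ≤ mnp a b z + mnp a b w := np_add_le hb _ _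

lemma mnp22_sq (w : Fin m → Fin k → ℝ) : mnp 2 2 w = (Bf w w) ^ ((1:ℝ)/2) := by
  unfold mnp np
  have h1 : ∀ j, (abs ((∑ i, |w i j| ^ (2:ℝ)) ^ ((1:ℝ)/(2:ℝ)))) ^ (2:ℝ)
      = ∑ i, |w i j| ^ (2:ℝ) := by
    intro j
    rw [abs_of_nonneg (Real.rpow_nonneg (np_sum_nonneg 2 _) _),
      ← Real.rpow_mul (np_sum_nonneg 2 _)]
    norm_num
  simp only [h1]
  have h2 : Bf w w = ∑ j, ∑ i, |w i j| ^ (2:ℝ) := by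
    rw [Bf]
    rw [Finset.sum_comm]
    refine Finset.sum_congr rfl fun j _ => Finset.sum_congr rfl fun i _ => ?_
    rw [show (2:ℝ) = ((2:ℕ):ℝ) by norm_num, Real.rpow_natCast, sq_abs, sq]
  rw [h2]

lemma mnp_le_l2 {a b : ℝ} (ha1 : 1 ≤ a) (ha2 : a ≤ 2) (hb1 : 1 ≤ b) (hb2 : b ≤ 2)
    (w : Fin m → Fin k → ℝ) :
    mnp a b w ≤ (m : ℝ) ^ (1/a - 1/2) * (k : ℝ) ^ (1/b - 1/2) * mnp 2 2 w := by
  set Ca := (m : ℝ) ^ (1/a - 1/2) with hCa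
  set Cb := (k : ℝ) ^ (1/b - 1/2) with hCb
  have hCa0 : 0 ≤ Ca := Real.rpow_nonneg (Nat.cast_nonneg _) _
  have hCb0 : 0 ≤ Cb := Real.rpow_nonneg (Nat.cast_nonneg _) _
  have hcol : ∀ j, (np a fun i => w i j) ≤ Ca * (np 2 fun i => w i j) := by
    intro j
    have h := np_le_np2 ha1 ha2 (fun i => w i j)
    rw [Fintype.card_fin] at h
    exact h
  calc mnp a b w
      ≤ np b (fun j => Ca * (np 2 fun i => w i j)) := by
        apply np_mono (lt_of_lt_of_le zero_lt_one hb1)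
        intro j
        rw [abs_of_nonneg (np_nonneg _ _), abs_of_nonneg (mul_nonneg hCa0 (np_nonneg _ _))]
        exact hcol j
    _ = Ca * np b (fun j => np 2 fun i => w i j) :=
        np_smul (lt_of_lt_of_le zero_lt_one hb1) Ca hCa0 _
    _ ≤ Ca * (Cb * np 2 (fun j => np 2 fun i => w i j)) := by
        apply mul_le_mul_of_nonneg_left _ hCa0
        have h := np_le_np2 hb1 hb2 (fun j => np 2 fun i => w i j)
        rw [Fintype.card_fin] at h
        exact h
    _ = Ca * Cb * mnp 2 2 w := by rw [mnp]; ring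

/-! ### Signs and shifts -/

def sg (b : Bool) : ℝ := if b then 1 else -1

lemma sg_mul_self (b : Bool) : sg b * sg b = 1 := by cases b <;> simp [sg]

lemma abs_sg (b : Bool) : |sg b| = 1 := by cases b <;> simp [sg]

lemma signSum {m : ℕ} {i i' : Fin m} (h : i ≠ i') :
    ∑ ε : Fin m → Bool, sg (ε i) * sg (ε i') = 0 := by
  have hinv : Function.Involutive
      (fun ε : Fin m → Bool => Function.update ε i (!(ε i))) := by
    intro ε
    simp only [Function.update_self]
    rw [Function.update_idem, Bool.not_not, Function.update_eq_self]
  set π := hinv.toPerm with hπ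
  have hstep : ∀ ε : Fin m → Bool, sg (π ε i) * sg (π ε i') = -(sg (ε i) * sg (ε i')) := by
    intro ε
    have h1 : π ε i = !(ε i) := Function.update_self _ _ _
    have h2 : π ε i' = ε i' := Function.update_of_ne (Ne.symm h) _ _
    rw [h1, h2]
    cases (ε i) <;> cases (ε i') <;> simp [sg]
  have := Equiv.sum_comp π (fun ε : Fin m → Bool => sg (ε i) * sg (ε i'))
  have h2 : ∑ ε : Fin m → Bool, sg ((π ε) i) * sg ((π ε) i')
      = -∑ ε : Fin m → Bool, sg (ε i) * sg (ε i') := by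
    rw [← Finset.sum_neg_distrib]
    exact Finset.sum_congr rfl fun ε _ => hstep ε
  have h3 : ∑ ε : Fin m → Bool, sg (ε i) * sg (ε i')
      = -∑ ε : Fin m → Bool, sg (ε i) * sg (ε i') := by
    rw [← h2]
    exact (Equiv.sum_comp π (fun ε : Fin m → Bool => sg (ε i) * sg (ε i'))).symm
  linarith

lemma signSumDiag (m : ℕ) (i : Fin m) :
    ∑ ε : Fin m → Bool, sg (ε i) * sg (ε i) = 2 ^ m := by
  have : ∀ ε : Fin m → Bool, sg (ε i) * sg (ε i) = 1 := fun ε => sg_mul_self _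
  simp only [this, Finset.sum_const, Finset.card_univ, nsmul_eq_mul, mul_one]
  rw [Fintype.card_fun]
  simp

lemma iteSum_aux {m r : ℕ} (hrm : r ≤ m) :
    ∑ i : Fin m, (if (i : ℕ) < r then (1:ℝ) else 0) = r := by
  rw [Fin.sum_univ_eq_sum_range (fun i => if i < r then (1:ℝ) else 0) m]
  rw [Finset.sum_boole]
  have : (Finset.range m).filter (fun x => x < r) = Finset.range r := by
    ext x
    simp only [Finset.mem_filter, Finset.mem_range]
    omega
  rw [this, Finset.card_range]

lemma iteSum_left {m r : ℕ} [NeZero m] (hrm : r ≤ m) (t : Fin m) :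
    ∑ i : Fin m, (if ((i + t : Fin m) : ℕ) < r then (1:ℝ) else 0) = r := by
  rw [Fintype.sum_equiv (Equiv.addRight t)
    (fun i : Fin m => if ((i + t : Fin m) : ℕ) < r then (1:ℝ) else 0)
    (fun i : Fin m => if (i : ℕ) < r then (1:ℝ) else 0) (fun x => rfl)]
  exact iteSum_aux hrm

lemma iteSum_right {m r : ℕ} [NeZero m] (hrm : r ≤ m) (i : Fin m) :
    ∑ t : Fin m, (if ((i + t : Fin m) : ℕ) < r then (1:ℝ) else 0) = r := by
  rw [Fintype.sum_equiv (Equiv.addLeft i)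
    (fun t : Fin m => if ((i + t : Fin m) : ℕ) < r then (1:ℝ) else 0)
    (fun t : Fin m => if (t : ℕ) < r then (1:ℝ) else 0) (fun x => rfl)]
  exact iteSum_aux hrm

/-! ### Vertices of the orbit -/

/-- index type of the vertex family -/
abbrev Gam (m k : ℕ) := (Fin m × Fin k) × (Fin m → Bool) × (Fin k → Bool)

/-- a vertex of `V`: signed, cyclically shifted `r × l` window -/
def vx (m k r l : ℕ) [NeZero m] [NeZero k] (γ : Gam m k) : Fin m → Fin k → ℝ :=
  fun i j => sg (γ.2.1 i) * sg (γ.2.2 j) *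
    (if ((i + γ.1.1 : Fin m) : ℕ) < r ∧ ((j + γ.1.2 : Fin k) : ℕ) < l then 1 else 0)

variable {m k r l : ℕ} [NeZero m] [NeZero k]

lemma ite_and_split (P Q : Prop) [Decidable P] [Decidable Q] :
    (if P ∧ Q then (1:ℝ) else 0) = (if P then (1:ℝ) else 0) * (if Q then (1:ℝ) else 0) := by
  by_cases hP : P <;> by_cases hQ : Q <;> simp [hP, hQ]

lemma sum_prod_fact {α β : Type*} [Fintype α] [Fintype β] (f : α → ℝ) (g : β → ℝ) :
    ∑ p : α × β, f p.1 * g p.2 = (∑ a, f a) * (∑ b, g b) := by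
  rw [Finset.sum_mul_sum]
  rw [Fintype.sum_prod_type]

lemma vx_cov (hrm : r ≤ m) (hlk : l ≤ k) (i i' : Fin m) (j j' : Fin k) :
    ∑ γ : Gam m k, vx m k r l γ i j * vx m k r l γ i' j' =
      if i = i' ∧ j = j' then ((r : ℝ) * l * 2 ^ m * 2 ^ k) else 0 := by
  set A : Fin m → ℝ := fun t =>
    (if ((i + t : Fin m) : ℕ) < r then (1:ℝ) else 0) *
    (if ((i' + t : Fin m) : ℕ) < r then (1:ℝ) else 0) with hA
  set B : Fin k → ℝ := fun u =>
    (if ((j + u : Fin k) : ℕ) < l then (1:ℝ) else 0) *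
    (if ((j' + u : Fin k) : ℕ) < l then (1:ℝ) else 0) with hB
  set C : (Fin m → Bool) → ℝ := fun ε => sg (ε i) * sg (ε i') with hC
  set D : (Fin k → Bool) → ℝ := fun η => sg (η j) * sg (η j') with hD
  have hsummand : ∀ γ : Gam m k,
      vx m k r l γ i j * vx m k r l γ i' j' =
      (fun p : Fin m × Fin k => A p.1 * B p.2) γ.1 *
      (fun e : (Fin m → Bool) × (Fin k → Bool) => C e.1 * D e.2) γ.2 := by
    intro γ
    simp only [vx, hA, hB, hC, hD, ite_and_split]
    ring
  have key : ∑ γ : Gam m k, vx m k r l γ i j * vx m k r l γ i' j' =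
      ((∑ t, A t) * (∑ u, B u)) * ((∑ ε, C ε) * (∑ η, D η)) := by
    calc ∑ γ : Gam m k, vx m k r l γ i j * vx m k r l γ i' j'
        = ∑ γ : Gam m k, (fun p : Fin m × Fin k => A p.1 * B p.2) γ.1 *
            (fun e : (Fin m → Bool) × (Fin k → Bool) => C e.1 * D e.2) γ.2 :=
          Finset.sum_congr rfl fun γ _ => hsummand γ
      _ = (∑ p : Fin m × Fin k, A p.1 * B p.2) *
            (∑ e : (Fin m → Bool) × (Fin k → Bool), C e.1 * D e.2) :=
          sum_prod_fact (fun p : Fin m × Fin k => A p.1 * B p.2)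
            (fun e : (Fin m → Bool) × (Fin k → Bool) => C e.1 * D e.2)
      _ = ((∑ t, A t) * (∑ u, B u)) * ((∑ ε, C ε) * (∑ η, D η)) := by
          rw [sum_prod_fact, sum_prod_fact]
  rw [key]
  by_cases hii : i = i'
  · by_cases hjj : j = j'
    · subst hii; subst hjj
      have e1 : ∑ t, A t = r := by
        have h : ∀ t : Fin m, A t = (if ((i + t : Fin m) : ℕ) < r then (1:ℝ) else 0) := by
          intro t
          simp only [hA]
          by_cases h : ((i + t : Fin m) : ℕ) < r <;> simp [h]
        simp only [h]
        exact iteSum_right hrm i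
      have e2 : ∑ u, B u = l := by
        have h : ∀ u : Fin k, B u = (if ((j + u : Fin k) : ℕ) < l then (1:ℝ) else 0) := by
          intro u
          simp only [hB]
          by_cases h : ((j + u : Fin k) : ℕ) < l <;> simp [h]
        simp only [h]
        exact iteSum_right hlk j
      have e3 : ∑ ε, C ε = 2 ^ m := signSumDiag m i
      have e4 : ∑ η, D η = 2 ^ k := signSumDiag k j
      rw [e1, e2, e3, e4, if_pos ⟨rfl, rfl⟩]
      ring
    · have e4 : ∑ η, D η = 0 := signSum hjj
      rw [e4, if_neg (by tauto)]
      ring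
  · have e3 : ∑ ε, C ε = 0 := signSum hii
    rw [e3, if_neg (by tauto)]
    ring

lemma vx_abs (γ : Gam m k) (i : Fin m) (j : Fin k) :
    |vx m k r l γ i j| =
      (if ((i + γ.1.1 : Fin m) : ℕ) < r then (1:ℝ) else 0) *
      (if ((j + γ.1.2 : Fin k) : ℕ) < l then (1:ℝ) else 0) := by
  unfold vx
  rw [abs_mul, abs_mul, abs_sg, abs_sg, one_mul, one_mul, ite_and_split]
  rw [abs_of_nonneg]
  positivity

lemma vx_abs_le_one (γ : Gam m k) (i : Fin m) (j : Fin k) : |vx m k r l γ i j| ≤ 1 := by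
  rw [vx_abs]
  by_cases h1 : ((i + γ.1.1 : Fin m) : ℕ) < r <;>
    by_cases h2 : ((j + γ.1.2 : Fin k) : ℕ) < l <;> simp [h1, h2]

lemma vx_Bf_self (hrm : r ≤ m) (hlk : l ≤ k) (γ : Gam m k) :
    Bf (vx m k r l γ) (vx m k r l γ) = (r : ℝ) * l := by
  unfold Bf
  have h : ∀ (i : Fin m) (j : Fin k), vx m k r l γ i j * vx m k r l γ i j =
      (if ((i + γ.1.1 : Fin m) : ℕ) < r then (1:ℝ) else 0) *
      (if ((j + γ.1.2 : Fin k) : ℕ) < l then (1:ℝ) else 0) := by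
    intro i j
    rw [← abs_mul_self (vx m k r l γ i j), abs_mul, vx_abs]
    by_cases h1 : ((i + γ.1.1 : Fin m) : ℕ) < r <;>
      by_cases h2 : ((j + γ.1.2 : Fin k) : ℕ) < l <;> simp [h1, h2]
  simp only [h]
  simp only [← Finset.mul_sum]
  rw [← Finset.sum_mul, iteSum_left hrm, iteSum_left hlk]

lemma vx_mnp {a b : ℝ} (ha : 0 < a) (hb : 0 < b) (hrm : r ≤ m) (hlk : l ≤ k) (γ : Gam m k) :
    mnp a b (vx m k r l γ) = (r : ℝ) ^ (1/a) * (l : ℝ) ^ (1/b) := by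
  have hr0 : (0:ℝ) ≤ r := Nat.cast_nonneg r
  have hcol : ∀ j : Fin k, (np a fun i => vx m k r l γ i j) =
      (if ((j + γ.1.2 : Fin k) : ℕ) < l then (1:ℝ) else 0) * (r : ℝ) ^ (1/a) := by
    intro j
    unfold np
    have h1 : ∀ i : Fin m, |vx m k r l γ i j| ^ a =
        (if ((i + γ.1.1 : Fin m) : ℕ) < r then (1:ℝ) else 0) *
        (if ((j + γ.1.2 : Fin k) : ℕ) < l then (1:ℝ) else 0) := by
      intro i
      rw [vx_abs]
      by_cases h1 : ((i + γ.1.1 : Fin m) : ℕ) < r <;>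
        by_cases h2 : ((j + γ.1.2 : Fin k) : ℕ) < l <;>
        simp [h1, h2, Real.zero_rpow ha.ne', Real.one_rpow]
    simp only [h1]
    rw [← Finset.sum_mul, iteSum_left hrm]
    by_cases h2 : ((j + γ.1.2 : Fin k) : ℕ) < l
    · simp only [if_pos h2, one_mul, mul_one]
    · simp only [if_neg h2, zero_mul, mul_zero]
      rw [Real.zero_rpow (by positivity : 1/a ≠ 0)]
  unfold mnp
  simp only [hcol]
  have h2 : ∀ j : Fin k, |(if ((j + γ.1.2 : Fin k) : ℕ) < l then (1:ℝ) else 0) *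
      (r : ℝ) ^ (1/a)| ^ b =
      (if ((j + γ.1.2 : Fin k) : ℕ) < l then (1:ℝ) else 0) * ((r:ℝ) ^ (1/a)) ^ b := by
    intro j
    by_cases h : ((j + γ.1.2 : Fin k) : ℕ) < l
    · rw [if_pos h, one_mul, one_mul, abs_of_nonneg (Real.rpow_nonneg hr0 _)]
    · rw [if_neg h, zero_mul, zero_mul, abs_zero, Real.zero_rpow hb.ne']
  unfold np
  simp only [h2]
  rw [← Finset.sum_mul, iteSum_left hlk]
  rw [Real.mul_rpow (Nat.cast_nonneg l) (Real.rpow_nonneg (Real.rpow_nonneg hr0 _) _)]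
  rw [← Real.rpow_mul (Real.rpow_nonneg hr0 _), mul_one_div, div_self hb.ne', Real.rpow_one]
  ring

/-! ### Orthonormal basis of a subspace w.r.t. `Bf` -/

lemma proj_exists {m' k' : ℕ} (L : Submodule ℝ (Fin m' → Fin k' → ℝ)) :
    ∃ u : Fin (Module.finrank ℝ L) → (Fin m' → Fin k' → ℝ),
      (∀ s, u s ∈ L) ∧
      (∀ s t, Bf (u s) (u t) = if s = t then 1 else 0) ∧
      (∀ y ∈ L, ∑ s, Bf y (u s) • u s = y) := by
  classical
  let φ : (Fin m' → Fin k' → ℝ) ≃ₗ[ℝ] EuclideanSpace ℝ (Fin m' × Fin k') :=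
    LinearEquiv.ofLinear
      { toFun := fun x => WithLp.toLp 2 (fun p : Fin m' × Fin k' => x p.1 p.2)
        map_add' := fun x y => rfl
        map_smul' := fun c x => rfl }
      { toFun := fun a => fun i j => a (i, j)
        map_add' := fun x y => rfl
        map_smul' := fun c x => rfl }
      (by ext a p; rfl) (by ext x i j; rfl)
  have hφ : ∀ (x : Fin m' → Fin k' → ℝ) (p : Fin m' × Fin k'), φ x p = x p.1 p.2 :=
    fun x p => rfl
  have hB : ∀ x y : Fin m' → Fin k' → ℝ, Bf x y = inner ℝ (φ x) (φ y) := by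
    intro x y
    rw [PiLp.inner_apply]
    simp only [RCLike.inner_apply, starRingEnd_apply, star_trivial]
    unfold Bf
    rw [Fintype.sum_prod_type]
    exact Finset.sum_congr rfl fun i _ => Finset.sum_congr rfl fun j _ => mul_comm _ _
  have hB' : ∀ a b : EuclideanSpace ℝ (Fin m' × Fin k'),
      Bf (φ.symm a) (φ.symm b) = inner ℝ a b := by
    intro a b
    rw [hB, LinearEquiv.apply_symm_apply, LinearEquiv.apply_symm_apply]
  set L' := L.map (φ : (Fin m' → Fin k' → ℝ) →ₗ[ℝ] EuclideanSpace ℝ (Fin m' × Fin k')) with hL'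
  have hdim : Module.finrank ℝ L' = Module.finrank ℝ L := LinearEquiv.finrank_map_eq φ L
  let b := stdOrthonormalBasis ℝ L'
  let c : Fin (Module.finrank ℝ L) → Fin (Module.finrank ℝ L') := fun s => Fin.cast hdim.symm s
  refine ⟨fun s => φ.symm ((b (c s) : L') : EuclideanSpace ℝ (Fin m' × Fin k')), ?_, ?_, ?_⟩
  · intro s
    have hm : ((b (c s) : L') : EuclideanSpace ℝ (Fin m' × Fin k')) ∈ L' := (b (c s)).2
    rcases Submodule.mem_map.mp hm with ⟨z, hz, hz2⟩
    have heq : φ.symm ((b (c s) : L') : EuclideanSpace ℝ (Fin m' × Fin k')) = z := by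
      rw [← hz2]
      exact φ.symm_apply_apply z
    show φ.symm ((b (c s) : L') : EuclideanSpace ℝ (Fin m' × Fin k')) ∈ L
    rw [heq]
    exact hz
  · intro s t
    rw [hB']
    have := orthonormal_iff_ite.mp b.orthonormal (c s) (c t)
    rw [Submodule.coe_inner] at this
    rw [this]
    have hcne : c s = c t ↔ s = t := by
      constructor
      · intro h
        have := congrArg Fin.val h
        exact Fin.ext this
      · intro h; rw [h]
    by_cases h : s = t
    · rw [if_pos (hcne.mpr h), if_pos h]
    · rw [if_neg (fun hh => h (hcne.mp hh)), if_neg h]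
  · intro y hy
    have hy' : φ y ∈ L' := Submodule.mem_map_of_mem hy
    have hrepr := b.sum_repr ⟨φ y, hy'⟩
    have hco : ∑ i, b.repr ⟨φ y, hy'⟩ i • ((b i : L') : EuclideanSpace ℝ (Fin m' × Fin k'))
        = φ y := by
      have := congrArg (Subtype.val) hrepr
      simpa using this
    have hcoef : ∀ i, b.repr ⟨φ y, hy'⟩ i
        = Bf y (φ.symm ((b i : L') : EuclideanSpace ℝ (Fin m' × Fin k'))) := by
      intro i
      rw [b.repr_apply_apply, Submodule.coe_inner]
      rw [hB]
      rw [LinearEquiv.apply_symm_apply]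
      exact (real_inner_comm _ _).symm
    calc ∑ s, Bf y (φ.symm ((b (c s) : L') : EuclideanSpace ℝ (Fin m' × Fin k'))) •
          φ.symm ((b (c s) : L') : EuclideanSpace ℝ (Fin m' × Fin k'))
        = ∑ i, Bf y (φ.symm ((b i : L') : EuclideanSpace ℝ (Fin m' × Fin k'))) •
          φ.symm ((b i : L') : EuclideanSpace ℝ (Fin m' × Fin k')) := by
          apply Fintype.sum_equiv (finCongr hdim.symm)
          intro s
          rfl
      _ = ∑ i, φ.symm (b.repr ⟨φ y, hy'⟩ i • ((b i : L') : EuclideanSpace ℝ (Fin m' × Fin k'))) := by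
          refine Finset.sum_congr rfl fun i _ => ?_
          rw [map_smul, hcoef]
      _ = φ.symm (∑ i, b.repr ⟨φ y, hy'⟩ i • ((b i : L') : EuclideanSpace ℝ (Fin m' × Fin k'))) := by
          rw [map_sum]
      _ = y := by rw [hco, LinearEquiv.symm_apply_apply]

/-! ### Core lower bound for a fixed subspace -/

lemma dist_lb {m k r l n : ℕ} [NeZero m] [NeZero k]
    (hrm : r ≤ m) (hlk : l ≤ k) (hr : 1 ≤ r) (hl : 1 ≤ l) (hn : 2 * n ≤ m * k)
    {Q S : ℝ} (hQ : 2 ≤ Q) (hS : 2 ≤ S)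
    (L : Submodule ℝ (Fin m → Fin k → ℝ)) (hL : Module.finrank ℝ L ≤ n) :
    ∃ γ : Gam m k, ∀ y ∈ L, (r : ℝ) * l / 2 ≤ mnp Q S (vx m k r l γ - y) *
      ((r:ℝ) ^ (1 - 1/Q) * (l:ℝ) ^ (1 - 1/S) +
        (m:ℝ) ^ (1/2 - 1/Q) * (k:ℝ) ^ (1/2 - 1/S) *
          (((r:ℝ) * l * n / ((m:ℝ) * k)) ^ ((1:ℝ)/2))) := by
  classical
  obtain ⟨u, huL, huO, huSpan⟩ := proj_exists L
  -- the projection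
  set P : (Fin m → Fin k → ℝ) → (Fin m → Fin k → ℝ) :=
    fun x => ∑ s, Bf x (u s) • u s with hP
  have hPL : ∀ x, P x ∈ L := fun x =>
    Submodule.sum_mem L fun s _ => Submodule.smul_mem L _ (huL s)
  have hxint : ∀ x z : Fin m → Fin k → ℝ, Bf z (P x) = ∑ s, Bf x (u s) * Bf z (u s) := by
    intro x z
    rw [hP, Bf_sum_right]
    exact Finset.sum_congr rfl fun s _ => Bf_smul_right _ _ _
  have hF2 : ∀ x, Bf x (P x) = ∑ s, (Bf x (u s)) ^ 2 := by
    intro x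
    rw [hxint x x]
    exact Finset.sum_congr rfl fun s _ => (sq (Bf x (u s))).symm
  have hF3 : ∀ x, Bf (P x) (P x) = ∑ s, (Bf x (u s)) ^ 2 := by
    intro x
    rw [hxint x (P x)]
    refine Finset.sum_congr rfl fun s _ => ?_
    have : Bf (P x) (u s) = Bf x (u s) := by
      rw [hP, Bf_sum_left]
      have : ∀ t, Bf (Bf x (u t) • u t) (u s) = Bf x (u t) * (if t = s then 1 else 0) := by
        intro t
        rw [Bf_smul_left, huO t s]
      simp only [this, mul_ite, mul_one, mul_zero]
      rw [Finset.sum_ite_eq' Finset.univ s (fun t => Bf x (u t))]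
      simp
    rw [this]
    ring
  have hF4 : ∀ x, ∀ y ∈ L, Bf y (x - P x) = 0 := by
    intro x y hy
    rw [Bf_sub_right, hxint x y]
    have hyx : Bf y x = ∑ s, Bf y (u s) * Bf (u s) x := by
      conv_lhs => rw [← huSpan y hy]
      rw [Bf_sum_left]
      exact Finset.sum_congr rfl fun s _ => Bf_smul_left _ _ _
    rw [hyx]
    rw [sub_eq_zero]
    exact Finset.sum_congr rfl fun s _ => by rw [Bf_comm (u s) x]; ring
  -- single-sum form of Bf
  have hBfp : ∀ x y : Fin m → Fin k → ℝ,
      Bf x y = ∑ p : Fin m × Fin k, x p.1 p.2 * y p.1 p.2 := by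
    intro x y
    unfold Bf
    rw [Fintype.sum_prod_type]
  -- covariance squared
  have hcov2 : ∀ w : Fin m → Fin k → ℝ,
      ∑ γ : Gam m k, (Bf (vx m k r l γ) w) ^ 2 =
        ((r:ℝ) * l * 2 ^ m * 2 ^ k) * Bf w w := by
    intro w
    have hexp : ∀ γ : Gam m k, (Bf (vx m k r l γ) w) ^ 2 =
        ∑ p : Fin m × Fin k, ∑ p' : Fin m × Fin k,
          (w p.1 p.2 * w p'.1 p'.2) *
          (vx m k r l γ p.1 p.2 * vx m k r l γ p'.1 p'.2) := by
      intro γ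
      rw [hBfp, sq, Finset.sum_mul_sum]
      exact Finset.sum_congr rfl fun p _ => Finset.sum_congr rfl fun p' _ => by ring
    simp only [hexp]
    rw [Finset.sum_comm]
    have h1 : ∀ p : Fin m × Fin k,
        ∑ γ : Gam m k, ∑ p' : Fin m × Fin k,
          (w p.1 p.2 * w p'.1 p'.2) *
          (vx m k r l γ p.1 p.2 * vx m k r l γ p'.1 p'.2)
        = (w p.1 p.2 * w p.1 p.2) * ((r:ℝ) * l * 2 ^ m * 2 ^ k) := by
      intro p
      rw [Finset.sum_comm]
      have h2 : ∀ p' : Fin m × Fin k,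
          ∑ γ : Gam m k, (w p.1 p.2 * w p'.1 p'.2) *
            (vx m k r l γ p.1 p.2 * vx m k r l γ p'.1 p'.2)
          = (w p.1 p.2 * w p'.1 p'.2) *
            (if p.1 = p'.1 ∧ p.2 = p'.2 then ((r : ℝ) * l * 2 ^ m * 2 ^ k) else 0) := by
        intro p'
        rw [← Finset.mul_sum, vx_cov hrm hlk]
      simp only [h2]
      have h3 : ∀ p' : Fin m × Fin k,
          (w p.1 p.2 * w p'.1 p'.2) *
            (if p.1 = p'.1 ∧ p.2 = p'.2 then ((r : ℝ) * l * 2 ^ m * 2 ^ k) else 0)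
          = (if p' = p then (w p.1 p.2 * w p.1 p.2 * ((r : ℝ) * l * 2 ^ m * 2 ^ k)) else 0) := by
        intro p'
        by_cases h : p' = p
        · subst h
          rw [if_pos ⟨rfl, rfl⟩, if_pos rfl]
        · rw [if_neg (fun hc => h (Prod.ext hc.1.symm hc.2.symm)), if_neg h, mul_zero]
      simp only [h3]
      rw [Finset.sum_ite_eq' Finset.univ p
        (fun _ => w p.1 p.2 * w p.1 p.2 * ((r:ℝ) * l * 2 ^ m * 2 ^ k))]
      simp
    simp only [h1]
    rw [hBfp w w, ← Finset.sum_mul]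
    ring
  -- total projected mass
  have htot : ∑ γ : Gam m k, Bf (P (vx m k r l γ)) (P (vx m k r l γ))
      ≤ ((r:ℝ) * l * 2 ^ m * 2 ^ k) * n := by
    have e1 : ∑ γ : Gam m k, Bf (P (vx m k r l γ)) (P (vx m k r l γ))
        = ∑ s, ∑ γ : Gam m k, (Bf (vx m k r l γ) (u s)) ^ 2 := by
      rw [Finset.sum_congr rfl (fun γ _ => hF3 (vx m k r l γ))]
      exact Finset.sum_comm
    rw [e1]
    have e2 : ∀ s, ∑ γ : Gam m k, (Bf (vx m k r l γ) (u s)) ^ 2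
        = ((r:ℝ) * l * 2 ^ m * 2 ^ k) := by
      intro s
      rw [hcov2 (u s), huO s s, if_pos rfl, mul_one]
    simp only [e2, Finset.sum_const, Finset.card_univ, Fintype.card_fin, nsmul_eq_mul]
    have hDn : ((Module.finrank ℝ L : ℕ) : ℝ) ≤ (n : ℝ) := Nat.cast_le.mpr hL
    have hC0 : (0:ℝ) ≤ (r:ℝ) * l * 2 ^ m * 2 ^ k := by positivity
    calc ((Module.finrank ℝ L : ℕ) : ℝ) * ((r:ℝ) * l * 2 ^ m * 2 ^ k)
        ≤ (n : ℝ) * ((r:ℝ) * l * 2 ^ m * 2 ^ k) :=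
          mul_le_mul_of_nonneg_right hDn hC0
      _ = ((r:ℝ) * l * 2 ^ m * 2 ^ k) * n := by ring
  -- select a good vertex
  have hsel : ∃ γ : Gam m k, Bf (P (vx m k r l γ)) (P (vx m k r l γ))
      ≤ (r:ℝ) * l * n / ((m:ℝ) * k) := by
    have hcard : (Fintype.card (Gam m k) : ℝ) = (m:ℝ) * k * 2 ^ m * 2 ^ k := by
      simp [Gam, Fintype.card_prod, Fintype.card_fun, Fintype.card_fin, Fintype.card_bool]
      ring
    have hm0 : (0:ℝ) < (m:ℝ) * k := by
      have : 0 < m := Nat.pos_of_ne_zero (NeZero.ne m)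
      have : 0 < k := Nat.pos_of_ne_zero (NeZero.ne k)
      positivity
    have hsum : ∑ γ : Gam m k, Bf (P (vx m k r l γ)) (P (vx m k r l γ))
        ≤ ∑ _γ : Gam m k, (r:ℝ) * l * n / ((m:ℝ) * k) := by
      rw [Finset.sum_const, Finset.card_univ, nsmul_eq_mul, hcard]
      refine le_trans htot ?_
      rw [le_iff_eq_or_lt]
      left
      have hm' : (m:ℝ) ≠ 0 := Nat.cast_ne_zero.mpr (NeZero.ne m)
      have hk' : (k:ℝ) ≠ 0 := Nat.cast_ne_zero.mpr (NeZero.ne k)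
      field_simp
    obtain ⟨γ, _, hγ⟩ := Finset.exists_le_of_sum_le ⟨(Classical.arbitrary (Gam m k)),
      Finset.mem_univ _⟩ hsum
    exact ⟨γ, hγ⟩
  obtain ⟨γ, hPv2⟩ := hsel
  refine ⟨γ, ?_⟩
  set v := vx m k r l γ with hv
  set Pv := P v with hPvdef
  set Qv := v - Pv with hQv
  have hvv : Bf v v = (r:ℝ) * l := vx_Bf_self hrm hlk γ
  have hrl1 : (1:ℝ) ≤ (r:ℝ) * l := by
    have : (1:ℝ) ≤ (r:ℝ) := by exact_mod_cast hr
    have h2 : (1:ℝ) ≤ (l:ℝ) := by exact_mod_cast hl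
    nlinarith
  have hmk0 : (0:ℝ) < (m:ℝ) * k := by
    have h1 : 0 < m := Nat.pos_of_ne_zero (NeZero.ne m)
    have h2 : 0 < k := Nat.pos_of_ne_zero (NeZero.ne k)
    positivity
  have hPv2' : Bf Pv Pv ≤ (r:ℝ) * l / 2 := by
    refine le_trans hPv2 ?_
    rw [div_le_div_iff₀ hmk0 (by norm_num : (0:ℝ) < 2)]
    have hcast : (2:ℝ) * n ≤ (m:ℝ) * k := by exact_mod_cast hn
    nlinarith [Nat.cast_nonneg (α := ℝ) n, hrl1]
  have hQQ : (r:ℝ) * l / 2 ≤ Bf Qv Qv := by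
    have h2 : Bf Pv Pv = Bf v Pv := by rw [hPvdef, hF3, ← hF2]
    have e : Bf Qv Qv = Bf v v - Bf v Pv := by
      rw [hQv, Bf_sub_left, Bf_sub_right, Bf_sub_right]
      have h1 : Bf Pv v = Bf v Pv := Bf_comm _ _
      linarith
    rw [e, hvv]
    linarith [hPv2', h2]
  intro y hy
  -- conjugate exponents
  have hQ1 : (1:ℝ) < Q := by linarith
  have hS1 : (1:ℝ) < S := by linarith
  have hQ0 : Q ≠ 0 := by linarith
  have hS0 : S ≠ 0 := by linarith
  set Q' := Q / (Q - 1) with hQ'def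
  set S' := S / (S - 1) with hS'def
  have hQc : Real.HolderConjugate Q Q' := by
    exact (Real.holderConjugate_iff_eq_conjExponent hQ1).mpr rfl
  have hSc : Real.HolderConjugate S S' := by
    exact (Real.holderConjugate_iff_eq_conjExponent hS1).mpr rfl
  have hQ'inv : 1 / Q' = 1 - 1 / Q := by
    rw [hQ'def]
    field_simp
  have hS'inv : 1 / S' = 1 - 1 / S := by
    rw [hS'def]
    field_simp
  have hQ'1 : 1 ≤ Q' := by
    rw [hQ'def, le_div_iff₀ (by linarith)]
    linarith
  have hQ'2 : Q' ≤ 2 := by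
    rw [hQ'def, div_le_iff₀ (by linarith)]
    linarith
  have hS'1 : 1 ≤ S' := by
    rw [hS'def, le_div_iff₀ (by linarith)]
    linarith
  have hS'2 : S' ≤ 2 := by
    rw [hS'def, div_le_iff₀ (by linarith)]
    linarith
  -- dual norm bound
  set T1 : ℝ := (r:ℝ) ^ (1 - 1/Q) * (l:ℝ) ^ (1 - 1/S) with hT1
  set T2 : ℝ := (m:ℝ) ^ (1/2 - 1/Q) * (k:ℝ) ^ (1/2 - 1/S) *
    (((r:ℝ) * l * n / ((m:ℝ) * k)) ^ ((1:ℝ)/2)) with hT2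
  have hdual : mnp Q' S' Qv ≤ T1 + T2 := by
    have h1 : mnp Q' S' Qv ≤ mnp Q' S' v + mnp Q' S' Pv :=
      mnp_sub_le hQ'1 hS'1 v Pv
    have h2 : mnp Q' S' v = T1 := by
      rw [hv, vx_mnp (by linarith : (0:ℝ) < Q') (by linarith : (0:ℝ) < S') hrm hlk γ,
        hQ'inv, hS'inv, hT1]
    have h3 : mnp Q' S' Pv ≤ T2 := by
      calc mnp Q' S' Pv
          ≤ (m:ℝ) ^ (1/Q' - 1/2) * (k:ℝ) ^ (1/S' - 1/2) * mnp 2 2 Pv :=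
            mnp_le_l2 hQ'1 hQ'2 hS'1 hS'2 Pv
        _ ≤ T2 := by
            rw [mnp22_sq, hT2]
            have e1 : 1/Q' - 1/2 = 1/2 - 1/Q := by rw [hQ'inv]; ring
            have e2 : 1/S' - 1/2 = 1/2 - 1/S := by rw [hS'inv]; ring
            rw [e1, e2]
            apply mul_le_mul_of_nonneg_left _ (by positivity)
            exact Real.rpow_le_rpow (Bf_self_nonneg _) hPv2 (by norm_num)
    linarith
  -- final chain
  have hperp : Bf (v - y) Qv = Bf Qv Qv := by
    have hvy : v - y = Qv + (Pv - y) := by rw [hQv]; abel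
    rw [hvy]
    have hadd : Bf (Qv + (Pv - y)) Qv = Bf Qv Qv + Bf (Pv - y) Qv := by
      have := Bf_sub_left (Qv + (Pv - y)) (Pv - y) Qv
      simp only [add_sub_cancel_right] at this
      linarith [this]
    rw [hadd]
    have hmem : Pv - y ∈ L := Submodule.sub_mem L (hPL v) hy
    have := hF4 v (Pv - y) hmem
    rw [hQv]
    rw [show Bf (Pv - y) (v - Pv) = 0 from this]
    ring
  have hhold : Bf (v - y) Qv ≤ mnp Q S (v - y) * mnp Q' S' Qv :=
    mnp_holder hQc hSc (v - y) Qv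
  calc (r:ℝ) * l / 2 ≤ Bf Qv Qv := hQQ
    _ = Bf (v - y) Qv := hperp.symm
    _ ≤ mnp Q S (v - y) * mnp Q' S' Qv := hhold
    _ ≤ mnp Q S (v - y) * (T1 + T2) := by
        apply mul_le_mul_of_nonneg_left hdual (mnp_nonneg _ _ _)

/-! ### Final arithmetic -/

lemma eq_of_log {x y : ℝ} (hx : 0 < x) (hy : 0 < y) (h : Real.log x = Real.log y) : x = y := by
  rw [← Real.exp_log hx, ← Real.exp_log hy, h]

lemma case1_arith {M K R L N Q S : ℝ}
    (hM1 : 1 ≤ M) (hK1 : 1 ≤ K) (hR1 : 1 ≤ R) (hL1 : 1 ≤ L)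
    (hQ : 2 ≤ Q) (hS : 2 ≤ S) (hN1 : 1 ≤ N)
    (hNle : N ≤ M ^ (2 * (1/Q)) * K ^ (2 * (1/S)) * R ^ (1 - 2 * (1/Q)) * L ^ (1 - 2 * (1/S))) :
    (1/4 : ℝ) * (R ^ (1/Q) * L ^ (1/S)) ≤
      R * L / 2 / (R ^ (1 - 1/Q) * L ^ (1 - 1/S) +
        M ^ ((1:ℝ)/2 - 1/Q) * K ^ ((1:ℝ)/2 - 1/S) * ((R * L * N / (M * K)) ^ ((1:ℝ)/2))) := by
  have hM0 : (0:ℝ) < M := lt_of_lt_of_le zero_lt_one hM1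
  have hK0 : (0:ℝ) < K := lt_of_lt_of_le zero_lt_one hK1
  have hR0 : (0:ℝ) < R := lt_of_lt_of_le zero_lt_one hR1
  have hL0 : (0:ℝ) < L := lt_of_lt_of_le zero_lt_one hL1
  have hN0 : (0:ℝ) < N := lt_of_lt_of_le zero_lt_one hN1
  set T1 := R ^ (1 - 1/Q) * L ^ (1 - 1/S) with hT1def
  set T2 := M ^ ((1:ℝ)/2 - 1/Q) * K ^ ((1:ℝ)/2 - 1/S) *
    ((R * L * N / (M * K)) ^ ((1:ℝ)/2)) with hT2def
  have hT1p : (0:ℝ) < T1 := by rw [hT1def]; positivity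
  have hT2p : (0:ℝ) < T2 := by rw [hT2def]; positivity
  have hlogN : Real.log N ≤ 2 * (1/Q) * Real.log M + 2 * (1/S) * Real.log K
      + (1 - 2*(1/Q)) * Real.log R + (1 - 2*(1/S)) * Real.log L := by
    have h := (Real.log_le_log_iff hN0 (by positivity)).mpr hNle
    rwa [Real.log_mul (by positivity) (by positivity),
      Real.log_mul (by positivity) (by positivity),
      Real.log_mul (by positivity) (by positivity),
      Real.log_rpow hM0, Real.log_rpow hK0, Real.log_rpow hR0, Real.log_rpow hL0] at h
  have hlT2 : Real.log T2 = ((1:ℝ)/2 - 1/Q) * Real.log M + ((1:ℝ)/2 - 1/S) * Real.log K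
      + (1/2) * (Real.log R + Real.log L + Real.log N - (Real.log M + Real.log K)) := by
    rw [hT2def, Real.log_mul (by positivity) (by positivity),
      Real.log_mul (by positivity) (by positivity),
      Real.log_rpow hM0, Real.log_rpow hK0, Real.log_rpow (by positivity),
      Real.log_div (by positivity) (by positivity),
      Real.log_mul (by positivity) (by positivity),
      Real.log_mul (by positivity) (by positivity),
      Real.log_mul (by positivity) (by positivity)]
    try ring
  have hlT1 : Real.log T1 = (1 - 1/Q) * Real.log R + (1 - 1/S) * Real.log L := by
    rw [hT1def, Real.log_mul (by positivity) (by positivity),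
      Real.log_rpow hR0, Real.log_rpow hL0]
  have hT2T1 : T2 ≤ T1 := by
    rw [← Real.log_le_log_iff hT2p hT1p, hlT2, hlT1]
    linarith
  have hkey : R ^ (1/Q) * L ^ (1/S) * T1 = R * L := by
    rw [hT1def, show R ^ (1/Q) * L ^ (1/S) * (R ^ (1 - 1/Q) * L ^ (1 - 1/S))
      = (R ^ (1/Q) * R ^ (1 - 1/Q)) * (L ^ (1/S) * L ^ (1 - 1/S)) from by ring,
      ← Real.rpow_add hR0, ← Real.rpow_add hL0]
    norm_num
  have hkey2 : (1/4 : ℝ) * (R ^ (1/Q) * L ^ (1/S)) = R * L / (4 * T1) := by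
    rw [eq_div_iff (by positivity)]
    linear_combination hkey
  rw [hkey2]
  have h2T : T1 + T2 ≤ 2 * T1 := by linarith
  calc R * L / (4 * T1) = (R * L / 2) / (2 * T1) := by ring
    _ ≤ (R * L / 2) / (T1 + T2) := by
        apply div_le_div_of_nonneg_left (by positivity) (by positivity) h2T

lemma case2_arith {M K R L N Q S : ℝ}
    (hM1 : 1 ≤ M) (hK1 : 1 ≤ K) (hR1 : 1 ≤ R) (hL1 : 1 ≤ L)
    (hQ : 2 ≤ Q) (hS : 2 ≤ S) (hN1 : 1 ≤ N)
    (hNge : M ^ (2 * (1/Q)) * K ^ (2 * (1/S)) * R ^ (1 - 2 * (1/Q)) * L ^ (1 - 2 * (1/S)) ≤ N) :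
    (1/4 : ℝ) * (N ^ (-(1:ℝ)/2) * M ^ (1/Q) * K ^ (1/S) * R ^ ((1:ℝ)/2) * L ^ ((1:ℝ)/2)) ≤
      R * L / 2 / (R ^ (1 - 1/Q) * L ^ (1 - 1/S) +
        M ^ ((1:ℝ)/2 - 1/Q) * K ^ ((1:ℝ)/2 - 1/S) * ((R * L * N / (M * K)) ^ ((1:ℝ)/2))) := by
  have hM0 : (0:ℝ) < M := lt_of_lt_of_le zero_lt_one hM1
  have hK0 : (0:ℝ) < K := lt_of_lt_of_le zero_lt_one hK1
  have hR0 : (0:ℝ) < R := lt_of_lt_of_le zero_lt_one hR1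
  have hL0 : (0:ℝ) < L := lt_of_lt_of_le zero_lt_one hL1
  have hN0 : (0:ℝ) < N := lt_of_lt_of_le zero_lt_one hN1
  set T1 := R ^ (1 - 1/Q) * L ^ (1 - 1/S) with hT1def
  set T2 := M ^ ((1:ℝ)/2 - 1/Q) * K ^ ((1:ℝ)/2 - 1/S) *
    ((R * L * N / (M * K)) ^ ((1:ℝ)/2)) with hT2def
  set t4 := N ^ (-(1:ℝ)/2) * M ^ (1/Q) * K ^ (1/S) * R ^ ((1:ℝ)/2) * L ^ ((1:ℝ)/2) with ht4def
  have hT1p : (0:ℝ) < T1 := by rw [hT1def]; positivity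
  have hT2p : (0:ℝ) < T2 := by rw [hT2def]; positivity
  have ht4p : (0:ℝ) < t4 := by rw [ht4def]; positivity
  have hlogN : 2 * (1/Q) * Real.log M + 2 * (1/S) * Real.log K
      + (1 - 2*(1/Q)) * Real.log R + (1 - 2*(1/S)) * Real.log L ≤ Real.log N := by
    have h := (Real.log_le_log_iff (by positivity) hN0).mpr hNge
    rwa [Real.log_mul (by positivity) (by positivity),
      Real.log_mul (by positivity) (by positivity),
      Real.log_mul (by positivity) (by positivity),
      Real.log_rpow hM0, Real.log_rpow hK0, Real.log_rpow hR0, Real.log_rpow hL0] at h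
  have hlT2 : Real.log T2 = ((1:ℝ)/2 - 1/Q) * Real.log M + ((1:ℝ)/2 - 1/S) * Real.log K
      + (1/2) * (Real.log R + Real.log L + Real.log N - (Real.log M + Real.log K)) := by
    rw [hT2def, Real.log_mul (by positivity) (by positivity),
      Real.log_mul (by positivity) (by positivity),
      Real.log_rpow hM0, Real.log_rpow hK0, Real.log_rpow (by positivity),
      Real.log_div (by positivity) (by positivity),
      Real.log_mul (by positivity) (by positivity),
      Real.log_mul (by positivity) (by positivity),
      Real.log_mul (by positivity) (by positivity)]
    try ring
  have hlT1 : Real.log T1 = (1 - 1/Q) * Real.log R + (1 - 1/S) * Real.log L := by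
    rw [hT1def, Real.log_mul (by positivity) (by positivity),
      Real.log_rpow hR0, Real.log_rpow hL0]
  have hT1T2 : T1 ≤ T2 := by
    rw [← Real.log_le_log_iff hT1p hT2p, hlT2, hlT1]
    linarith
  have hlt4 : Real.log t4 = (-(1:ℝ)/2) * Real.log N + (1/Q) * Real.log M
      + (1/S) * Real.log K + ((1:ℝ)/2) * Real.log R + ((1:ℝ)/2) * Real.log L := by
    rw [ht4def, Real.log_mul (by positivity) (by positivity),
      Real.log_mul (by positivity) (by positivity),
      Real.log_mul (by positivity) (by positivity),
      Real.log_mul (by positivity) (by positivity),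
      Real.log_rpow hN0, Real.log_rpow hM0, Real.log_rpow hK0,
      Real.log_rpow hR0, Real.log_rpow hL0]
    try ring
  have hkey : t4 * T2 = R * L := by
    apply eq_of_log (by positivity) (by positivity)
    have hsplit : Real.log (t4 * T2) = Real.log t4 + Real.log T2 :=
      Real.log_mul (ne_of_gt ht4p) (ne_of_gt hT2p)
    have hsplit2 : Real.log (R * L) = Real.log R + Real.log L :=
      Real.log_mul (ne_of_gt hR0) (ne_of_gt hL0)
    rw [hsplit, hsplit2, hlt4, hlT2]
    ring
  have hkey2 : (1/4 : ℝ) * t4 = R * L / (4 * T2) := by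
    rw [eq_div_iff (by positivity)]
    linear_combination hkey
  rw [hkey2]
  have h2T : T1 + T2 ≤ 2 * T2 := by linarith
  calc R * L / (4 * T2) = (R * L / 2) / (2 * T2) := by ring
    _ ≤ (R * L / 2) / (T1 + T2) := by
        apply div_le_div_of_nonneg_left (by positivity) (by positivity) h2T

lemma A_ge_one {M K R L Q S : ℝ}
    (hR1 : 1 ≤ R) (hL1 : 1 ≤ L) (hRM : R ≤ M) (hLK : L ≤ K)
    (hQ : 2 ≤ Q) (hS : 2 ≤ S) :
    1 ≤ M ^ (2 * (1/Q)) * K ^ (2 * (1/S)) * R ^ (1 - 2 * (1/Q)) * L ^ (1 - 2 * (1/S)) := by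
  have hR0 : (0:ℝ) < R := lt_of_lt_of_le zero_lt_one hR1
  have hL0 : (0:ℝ) < L := lt_of_lt_of_le zero_lt_one hL1
  have hM1 : 1 ≤ M := le_trans hR1 hRM
  have hK1 : 1 ≤ K := le_trans hL1 hLK
  have hQ0 : (0:ℝ) < Q := by linarith
  have hS0 : (0:ℝ) < S := by linarith
  have e1 : (1:ℝ) ≤ M ^ (2 * (1/Q)) * R ^ (1 - 2 * (1/Q)) := by
    have h1 : R ^ (2 * (1/Q)) ≤ M ^ (2 * (1/Q)) :=
      Real.rpow_le_rpow hR0.le hRM (by positivity)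
    have h2 : R ^ (2 * (1/Q)) * R ^ (1 - 2 * (1/Q)) = R := by
      rw [← Real.rpow_add hR0]
      norm_num
    have h3 : (0:ℝ) ≤ R ^ (1 - 2 * (1/Q)) := Real.rpow_nonneg hR0.le _
    nlinarith [Real.rpow_nonneg hR0.le (2 * (1/Q))]
  have e2 : (1:ℝ) ≤ K ^ (2 * (1/S)) * L ^ (1 - 2 * (1/S)) := by
    have h1 : L ^ (2 * (1/S)) ≤ K ^ (2 * (1/S)) :=
      Real.rpow_le_rpow hL0.le hLK (by positivity)
    have h2 : L ^ (2 * (1/S)) * L ^ (1 - 2 * (1/S)) = L := by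
      rw [← Real.rpow_add hL0]
      norm_num
    have h3 : (0:ℝ) ≤ L ^ (1 - 2 * (1/S)) := Real.rpow_nonneg hL0.le _
    nlinarith [Real.rpow_nonneg hL0.le (2 * (1/S))]
  calc (1:ℝ) = 1 * 1 := by norm_num
    _ ≤ (M ^ (2 * (1/Q)) * R ^ (1 - 2 * (1/Q))) * (K ^ (2 * (1/S)) * L ^ (1 - 2 * (1/S))) := by
        apply mul_le_mul e1 e2 zero_le_one
        positivity
    _ = M ^ (2 * (1/Q)) * K ^ (2 * (1/S)) * R ^ (1 - 2 * (1/Q)) * L ^ (1 - 2 * (1/S)) := by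
        ring

end Stmt3Aux

set_option maxHeartbeats 2000000 in
/-- **Lower bound for `V^{m,k}_{r,l}`.** For `2 ≤ q, σ < ∞` there is `c(q,σ) > 0` such
that for `1 ≤ r ≤ m`, `1 ≤ l ≤ k`, `0 ≤ n ≤ mk/2`:
if `n ≤ m^{2/q} k^{2/σ} r^{1−2/q} l^{1−2/σ}` then
`d_n(V^{m,k}_{r,l}, l^{m,k}_{q,σ}) ≥ c ⋅ r^{1/q} l^{1/σ}`, and if
`n ≥ m^{2/q} k^{2/σ} r^{1−2/q} l^{1−2/σ}` then
`d_n(V^{m,k}_{r,l}, l^{m,k}_{q,σ}) ≥ c ⋅ n^{−1/2} m^{1/q} k^{1/σ} r^{1/2} l^{1/2}`. -/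

theorem statement3 (q σ : ℝ≥0∞) (hq2 : 2 ≤ q) (hq : q ≠ ∞) (hs2 : 2 ≤ σ) (hs : σ ≠ ∞) :
    ∃ c : ℝ, 0 < c ∧
      ∀ (m k r l n : ℕ), 1 ≤ r → r ≤ m → 1 ≤ l → l ≤ k → 2 * n ≤ m * k →
        ((n : ℝ) ≤ (m : ℝ) ^ (2 * ir q) * (k : ℝ) ^ (2 * ir σ) *
            (r : ℝ) ^ (1 - 2 * ir q) * (l : ℝ) ^ (1 - 2 * ir σ) →
          c * ((r : ℝ) ^ ir q * (l : ℝ) ^ ir σ) ≤ kolWidth m k n (Vset m k r l) q σ) ∧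
        ((m : ℝ) ^ (2 * ir q) * (k : ℝ) ^ (2 * ir σ) *
            (r : ℝ) ^ (1 - 2 * ir q) * (l : ℝ) ^ (1 - 2 * ir σ) ≤ (n : ℝ) →
          c * ((n : ℝ) ^ (-(1 : ℝ) / 2) * (m : ℝ) ^ ir q * (k : ℝ) ^ ir σ *
              (r : ℝ) ^ ((1 : ℝ) / 2) * (l : ℝ) ^ ((1 : ℝ) / 2)) ≤
            kolWidth m k n (Vset m k r l) q σ) := by
  classical
  refine ⟨1/4, by norm_num, ?_⟩
  intro m k r l n hr hrm hl hlk hn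
  haveI : NeZero m := ⟨by omega⟩
  haveI : NeZero k := ⟨by omega⟩
  have hm1 : 1 ≤ m := le_trans hr hrm
  have hk1 : 1 ≤ k := le_trans hl hlk
  set Q := q.toReal with hQdef
  set S := σ.toReal with hSdef
  have hQ2 : (2:ℝ) ≤ Q := by
    have h := (ENNReal.toReal_le_toReal (by norm_num) hq).mpr hq2
    simpa using h
  have hS2 : (2:ℝ) ≤ S := by
    have h := (ENNReal.toReal_le_toReal (by norm_num) hs).mpr hs2
    simpa using h
  have hQ0 : (0:ℝ) < Q := by linarith
  have hS0 : (0:ℝ) < S := by linarith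
  have hirq : ir q = 1 / Q := by
    rw [show ir q = (q⁻¹).toReal from rfl, ENNReal.toReal_inv, one_div]
  have hirs : ir σ = 1 / S := by
    rw [show ir σ = (σ⁻¹).toReal from rfl, ENNReal.toReal_inv, one_div]
  -- mixedNorm coincides with the real-exponent mixed norm
  have hmn : ∀ z : Fin m → Fin k → ℝ, mixedNorm q σ z = Stmt3Aux.mnp Q S z := by
    intro z
    have hcol : ∀ j, lNorm q (fun i => z i j) = (∑ i, |z i j| ^ Q) ^ (1/Q) := by
      intro j
      rw [lNorm, if_neg hq]
    rw [mixedNorm, lNorm, if_neg hs]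
    unfold Stmt3Aux.mnp Stmt3Aux.np
    simp only [hcol]
    rfl
  -- entrywise bound on the set V
  have hbox : ∀ x ∈ Vset m k r l, ∀ i j, |x i j| ≤ 1 := by
    intro x hx
    have hsub : Vset m k r l ⊆ {x : Fin m → Fin k → ℝ | ∀ i j, |x i j| ≤ 1} := by
      apply convexHull_min
      · rintro y ⟨t1, t2, e1, e2, he1, he2, rfl⟩ i j
        have h1 : |e1 i| = 1 := by rcases he1 i with h | h <;> simp [h]
        have h2 : |e2 j| = 1 := by rcases he2 j with h | h <;> simp [h]
        rw [abs_mul, abs_mul, h1, h2, one_mul, one_mul]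
        by_cases hc : ((t1 i : ℕ) < r ∧ (t2 j : ℕ) < l) <;> simp [hc]
      · intro a ha b hb wa wb hwa hwb hab i j
        have he : (wa • a + wb • b) i j = wa * a i j + wb * b i j := rfl
        rw [Set.mem_setOf_eq] at ha hb
        calc |(wa • a + wb • b) i j| = |wa * a i j + wb * b i j| := by rw [he]
          _ ≤ |wa * a i j| + |wb * b i j| := abs_add_le _ _
          _ = wa * |a i j| + wb * |b i j| := by
              rw [abs_mul, abs_mul, abs_of_nonneg hwa, abs_of_nonneg hwb]
          _ ≤ wa * 1 + wb * 1 :=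
              add_le_add (mul_le_mul_of_nonneg_left (ha i j) hwa)
                (mul_le_mul_of_nonneg_left (hb i j) hwb)
          _ = 1 := by rw [mul_one, mul_one, hab]
    exact hsub hx
  -- mixed norm bound on V
  have hVnorm : ∀ x ∈ Vset m k r l, Stmt3Aux.mnp Q S x ≤ (m:ℝ) * k := by
    intro x hx
    have hb := hbox x hx
    have hmR : (1:ℝ) ≤ (m:ℝ) := by exact_mod_cast hm1
    have hkR : (1:ℝ) ≤ (k:ℝ) := by exact_mod_cast hk1
    have hcol : ∀ j, Stmt3Aux.np Q (fun i => x i j) ≤ (m:ℝ) := by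
      intro j
      have h1 : ∑ i, |x i j| ^ Q ≤ (m:ℝ) := by
        calc ∑ i, |x i j| ^ Q ≤ ∑ _i : Fin m, (1:ℝ) :=
              Finset.sum_le_sum fun i _ =>
                Real.rpow_le_one (abs_nonneg _) (hb i j) hQ0.le
          _ = m := by simp
      calc Stmt3Aux.np Q (fun i => x i j) ≤ ((m:ℝ)) ^ (1/Q) := by
            unfold Stmt3Aux.np
            exact Real.rpow_le_rpow (Stmt3Aux.np_sum_nonneg _ _) h1 (by positivity)
        _ ≤ ((m:ℝ)) ^ (1:ℝ) := Real.rpow_le_rpow_of_exponent_le hmR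
            (by rw [div_le_one hQ0]; linarith)
        _ = (m:ℝ) := Real.rpow_one _
    have h2 : ∑ j, |Stmt3Aux.np Q (fun i => x i j)| ^ S ≤ (k:ℝ) * (m:ℝ) ^ S := by
      calc ∑ j, |Stmt3Aux.np Q (fun i => x i j)| ^ S
          ≤ ∑ _j : Fin k, (m:ℝ) ^ S := by
            refine Finset.sum_le_sum fun j _ => ?_
            rw [abs_of_nonneg (Stmt3Aux.np_nonneg _ _)]
            exact Real.rpow_le_rpow (Stmt3Aux.np_nonneg _ _) (hcol j) hS0.le
        _ = (k:ℝ) * (m:ℝ) ^ S := by simp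
    calc Stmt3Aux.mnp Q S x
        = (∑ j, |Stmt3Aux.np Q (fun i => x i j)| ^ S) ^ (1/S) := rfl
      _ ≤ ((k:ℝ) * (m:ℝ) ^ S) ^ (1/S) :=
          Real.rpow_le_rpow (Stmt3Aux.np_sum_nonneg _ _) h2 (by positivity)
      _ = (k:ℝ) ^ (1/S) * (((m:ℝ) ^ S) ^ (1/S)) :=
          Real.mul_rpow (by positivity) (by positivity)
      _ = (k:ℝ) ^ (1/S) * (m:ℝ) := by
          rw [← Real.rpow_mul (by positivity), mul_one_div, div_self hS0.ne',
            Real.rpow_one]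
      _ ≤ (k:ℝ) * (m:ℝ) := by
          have : (k:ℝ) ^ (1/S) ≤ (k:ℝ) := by
            calc (k:ℝ) ^ (1/S) ≤ (k:ℝ) ^ (1:ℝ) := Real.rpow_le_rpow_of_exponent_le hkR
                  (by rw [div_le_one hS0]; linarith)
              _ = (k:ℝ) := Real.rpow_one _
          exact mul_le_mul_of_nonneg_right this (by linarith)
      _ = (m:ℝ) * k := by ring
  -- vertices belong to V
  have hvmem : ∀ γ : Stmt3Aux.Gam m k, Stmt3Aux.vx m k r l γ ∈ Vset m k r l := by
    intro γ
    apply subset_convexHull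
    refine ⟨Equiv.addRight γ.1.1, Equiv.addRight γ.1.2,
      fun i => Stmt3Aux.sg (γ.2.1 i), fun j => Stmt3Aux.sg (γ.2.2 j),
      fun i => ?_, fun j => ?_, rfl⟩
    · cases h : γ.2.1 i <;> simp [Stmt3Aux.sg, h]
    · cases h : γ.2.2 j <;> simp [Stmt3Aux.sg, h]
  -- real casts
  have hr1R : (1:ℝ) ≤ (r:ℝ) := by exact_mod_cast hr
  have hl1R : (1:ℝ) ≤ (l:ℝ) := by exact_mod_cast hl
  have hm1R : (1:ℝ) ≤ (m:ℝ) := by exact_mod_cast hm1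
  have hk1R : (1:ℝ) ≤ (k:ℝ) := by exact_mod_cast hk1
  have hrmR : (r:ℝ) ≤ (m:ℝ) := by exact_mod_cast hrm
  have hlkR : (l:ℝ) ≤ (k:ℝ) := by exact_mod_cast hlk
  set nb := max (n:ℝ) 1 with hnbdef
  have hnb1 : (1:ℝ) ≤ nb := le_max_right _ _
  have hnbn : (n:ℝ) ≤ nb := le_max_left _ _
  set T1 := (r:ℝ) ^ (1 - 1/Q) * (l:ℝ) ^ (1 - 1/S) with hT1def
  set T2 := (m:ℝ) ^ ((1:ℝ)/2 - 1/Q) * (k:ℝ) ^ ((1:ℝ)/2 - 1/S) *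
    (((r:ℝ) * l * nb / ((m:ℝ) * k)) ^ ((1:ℝ)/2)) with hT2def
  have hT1p : (0:ℝ) < T1 := by rw [hT1def]; positivity
  have hT2p : (0:ℝ) < T2 := by
    rw [hT2def]
    have h1 : (0:ℝ) < (r:ℝ) := by linarith
    have h2 : (0:ℝ) < (l:ℝ) := by linarith
    have h3 : (0:ℝ) < (m:ℝ) := by linarith
    have h4 : (0:ℝ) < (k:ℝ) := by linarith
    have h5 : (0:ℝ) < nb := by linarith
    positivity
  -- the main lower bound
  have hmain : (r:ℝ) * l / 2 / (T1 + T2) ≤ kolWidth m k n (Vset m k r l) q σ := by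
    rw [kolWidth]
    haveI : Nonempty {L : Submodule ℝ (Fin m → Fin k → ℝ) // Module.finrank ℝ L ≤ n} :=
      ⟨⟨⊥, by simp⟩⟩
    apply le_ciInf
    rintro ⟨L, hL⟩
    haveI : Nonempty L := ⟨0⟩
    obtain ⟨γ, hγ⟩ := Stmt3Aux.dist_lb hrm hlk hr hl hn hQ2 hS2 L hL
    set v := Stmt3Aux.vx m k r l γ with hvdef
    have hγ' : ∀ y : L, (r:ℝ) * l / 2 ≤
        mixedNorm q σ (v - (y : Fin m → Fin k → ℝ)) * (T1 + T2) := by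
      intro y
      have h0 := hγ (y : Fin m → Fin k → ℝ) y.2
      have hnn : 0 ≤ mixedNorm q σ (v - (y : Fin m → Fin k → ℝ)) := by
        rw [hmn]
        exact Stmt3Aux.mnp_nonneg _ _ _
      have hmono : (((r:ℝ) * l * n / ((m:ℝ) * k)) ^ ((1:ℝ)/2)) ≤
          (((r:ℝ) * l * nb / ((m:ℝ) * k)) ^ ((1:ℝ)/2)) := by
        apply Real.rpow_le_rpow (by positivity) ?_ (by norm_num)
        have hmk0 : (0:ℝ) < (m:ℝ) * k := by nlinarith
        have hrl0 : (0:ℝ) ≤ (r:ℝ) * l := by nlinarith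
        exact (div_le_div_iff_of_pos_right hmk0).mpr (mul_le_mul_of_nonneg_left hnbn hrl0)
      have hT2small : (m:ℝ) ^ ((1:ℝ)/2 - 1/Q) * (k:ℝ) ^ ((1:ℝ)/2 - 1/S) *
          (((r:ℝ) * l * n / ((m:ℝ) * k)) ^ ((1:ℝ)/2)) ≤ T2 := by
        rw [hT2def]
        exact mul_le_mul_of_nonneg_left hmono (by positivity)
      rw [← hmn] at h0
      calc (r:ℝ) * l / 2
          ≤ mixedNorm q σ (v - (y : Fin m → Fin k → ℝ)) *
            ((r:ℝ) ^ (1 - 1/Q) * (l:ℝ) ^ (1 - 1/S) +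
              (m:ℝ) ^ ((1:ℝ)/2 - 1/Q) * (k:ℝ) ^ ((1:ℝ)/2 - 1/S) *
                (((r:ℝ) * l * n / ((m:ℝ) * k)) ^ ((1:ℝ)/2))) := h0
        _ ≤ mixedNorm q σ (v - (y : Fin m → Fin k → ℝ)) * (T1 + T2) := by
            apply mul_le_mul_of_nonneg_left _ hnn
            rw [hT1def]
            linarith
    have hTpos : (0:ℝ) < T1 + T2 := by linarith
    have hinner : (r:ℝ) * l / 2 / (T1 + T2) ≤
        ⨅ y : L, mixedNorm q σ (v - (y : Fin m → Fin k → ℝ)) := by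
      apply le_ciInf
      intro y
      rw [div_le_iff₀ hTpos]
      exact hγ' y
    refine le_ciSup_of_le ?_ ⟨v, hvmem γ⟩ hinner
    refine ⟨(m:ℝ) * k, ?_⟩
    rintro z ⟨x, rfl⟩
    have hbb : BddBelow (Set.range fun y : L =>
        mixedNorm q σ ((x : Fin m → Fin k → ℝ) - (y : Fin m → Fin k → ℝ))) := by
      refine ⟨0, ?_⟩
      rintro w ⟨y, rfl⟩
      show (0:ℝ) ≤ mixedNorm q σ ((x : Fin m → Fin k → ℝ) - (y : Fin m → Fin k → ℝ))
      rw [hmn]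
      exact Stmt3Aux.mnp_nonneg _ _ _
    calc (⨅ y : L, mixedNorm q σ ((x : Fin m → Fin k → ℝ) - (y : Fin m → Fin k → ℝ)))
        ≤ mixedNorm q σ ((x : Fin m → Fin k → ℝ) - ((0 : L) : Fin m → Fin k → ℝ)) :=
          ciInf_le hbb (0 : L)
      _ = mixedNorm q σ (x : Fin m → Fin k → ℝ) := by
          norm_num
      _ ≤ (m:ℝ) * k := by
          rw [hmn]
          exact hVnorm _ x.2
  constructor
  · intro hc1
    rw [hirq, hirs] at hc1 ⊢
    refine le_trans ?_ hmain
    have hA1 : (1:ℝ) ≤ (m:ℝ) ^ (2 * (1/Q)) * (k:ℝ) ^ (2 * (1/S)) *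
        (r:ℝ) ^ (1 - 2 * (1/Q)) * (l:ℝ) ^ (1 - 2 * (1/S)) :=
      Stmt3Aux.A_ge_one hr1R hl1R hrmR hlkR hQ2 hS2
    have hnbA : nb ≤ (m:ℝ) ^ (2 * (1/Q)) * (k:ℝ) ^ (2 * (1/S)) *
        (r:ℝ) ^ (1 - 2 * (1/Q)) * (l:ℝ) ^ (1 - 2 * (1/S)) := max_le hc1 hA1
    exact Stmt3Aux.case1_arith hm1R hk1R hr1R hl1R hQ2 hS2 hnb1 hnbA
  · intro hc2
    rw [hirq, hirs] at hc2 ⊢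
    have hA1 : (1:ℝ) ≤ (m:ℝ) ^ (2 * (1/Q)) * (k:ℝ) ^ (2 * (1/S)) *
        (r:ℝ) ^ (1 - 2 * (1/Q)) * (l:ℝ) ^ (1 - 2 * (1/S)) :=
      Stmt3Aux.A_ge_one hr1R hl1R hrmR hlkR hQ2 hS2
    have h1n : (1:ℝ) ≤ (n:ℝ) := le_trans hA1 hc2
    have hnbeq : nb = (n:ℝ) := max_eq_left h1n
    have hnge : (m:ℝ) ^ (2 * (1/Q)) * (k:ℝ) ^ (2 * (1/S)) *
        (r:ℝ) ^ (1 - 2 * (1/Q)) * (l:ℝ) ^ (1 - 2 * (1/S)) ≤ nb := by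
      rw [hnbeq]; exact hc2
    refine le_trans ?_ hmain
    have hgoal := Stmt3Aux.case2_arith hm1R hk1R hr1R hl1R hQ2 hS2 hnb1 hnge
    rw [show ((n:ℝ)) = nb from hnbeq.symm]
    exact hgoal

end
end

section
/- There exists an absolute constant c > 0 such that for all m, k, r, l ∈ ℕ with 1 ≤ r ≤ m and 1 ≤ l ≤ k, and all n ∈ ℤ_+ with n ≤ mk/2, one has d_n(V^{m,k}_{r,l}, l^{m,k}_{2,2}) ≥ c · r^{1/2} l^{1/2}, where l^{m,k}_{2,2} is the Euclidean norm on ℝ^{m·k}. -/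
open scoped ENNReal NNReal BigOperators Pointwise

noncomputable section

open scoped RealInnerProductSpace

def sgnB (b : Bool) : ℝ := if b then 1 else -1

lemma sgnB_mul_self (b : Bool) : sgnB b * sgnB b = 1 := by cases b <;> simp [sgnB]

lemma sgnB_not (b : Bool) : sgnB (!b) = - sgnB b := by cases b <;> simp [sgnB]

lemma sgnB_sq (b : Bool) : sgnB b ^ 2 = 1 := by cases b <;> simp [sgnB]

lemma sum_sgn_pair {ι : Type*} [Fintype ι] [DecidableEq ι] (i i' : ι) :
    ∑ ε : ι → Bool, sgnB (ε i) * sgnB (ε i') =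
      if i = i' then (2 : ℝ) ^ (Fintype.card ι) else 0 := by
  split_ifs with h
  · subst h
    simp only [sgnB_mul_self]
    simp [Finset.card_univ, Fintype.card_fun]
  · -- flip at i
    have hinv : Function.Involutive
        (fun ε : ι → Bool => Function.update ε i (!(ε i))) := by
      intro ε; funext j
      rcases eq_or_ne j i with hj | hj <;> simp [Function.update_apply, hj]
    set e := hinv.toPerm
    have := Equiv.sum_comp e (fun ε : ι → Bool => sgnB (ε i) * sgnB (ε i'))
    have hterm : ∀ ε : ι → Bool,
        sgnB ((e ε) i) * sgnB ((e ε) i') = -(sgnB (ε i) * sgnB (ε i')) := by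
      intro ε
      have h1 : (e ε) i = !(ε i) := by simp [e, Function.Involutive.toPerm]
      have h2 : (e ε) i' = ε i' := by
        simp [e, Function.Involutive.toPerm, Function.update_apply, Ne.symm h]
      rw [h1, h2, sgnB_not]; ring
    rw [Finset.sum_congr rfl (fun ε _ => hterm ε), Finset.sum_neg_distrib] at this
    linarith

lemma sgnB_cases (b : Bool) : sgnB b = 1 ∨ sgnB b = -1 := by
  cases b <;> simp [sgnB]

lemma sum_sq_signs' {ι : Type*} [Fintype ι] [DecidableEq ι] (c : ι → ℝ) :
    ∑ ε : ι → Bool, (∑ i, sgnB (ε i) * c i) ^ 2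
      = 2 ^ (Fintype.card ι) * ∑ i, (c i) ^ 2 := by
  have expand : ∀ ε : ι → Bool, (∑ i, sgnB (ε i) * c i) ^ 2
      = ∑ i, ∑ i', (sgnB (ε i) * sgnB (ε i')) * (c i * c i') := by
    intro ε
    rw [sq, Finset.sum_mul_sum]
    exact Finset.sum_congr rfl fun i _ => Finset.sum_congr rfl fun i' _ => by ring
  rw [Finset.sum_congr rfl fun ε _ => expand ε]
  rw [Finset.sum_comm]
  have : ∀ i : ι, ∑ ε : ι → Bool, ∑ i', (sgnB (ε i) * sgnB (ε i')) * (c i * c i')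
      = 2 ^ (Fintype.card ι) * c i ^ 2 := by
    intro i
    rw [Finset.sum_comm]
    have : ∀ i' : ι, ∑ ε : ι → Bool, (sgnB (ε i) * sgnB (ε i')) * (c i * c i')
        = (if i = i' then (2:ℝ) ^ (Fintype.card ι) else 0) * (c i * c i') := by
      intro i'
      rw [← Finset.sum_mul, sum_sgn_pair i i']
    rw [Finset.sum_congr rfl fun i' _ => this i']
    simp [sq]
  rw [Finset.sum_congr rfl fun i _ => this i, ← Finset.mul_sum]

lemma perm_count {m r : ℕ} (hr : r ≤ m) (t : Equiv.Perm (Fin m)) :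
    ∑ i : Fin m, (if ((t i : Fin m) : ℕ) < r then (1:ℝ) else 0) = r := by
  rw [Equiv.sum_comp t (fun i : Fin m => if (i : ℕ) < r then (1:ℝ) else 0)]
  rw [Fin.sum_univ_eq_sum_range (fun i => if i < r then (1:ℝ) else 0) m]
  rw [← Finset.sum_subset (Finset.range_subset_range.2 hr)
    (fun x _ hx => by simp [Finset.mem_range] at hx ⊢; omega)]
  have h1 : ∀ x ∈ Finset.range r, (if x < r then (1:ℝ) else 0) = 1 :=
    fun x hx => by simp [Finset.mem_range.mp hx]
  rw [Finset.sum_congr rfl h1]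
  simp


def toE (m k : ℕ) : (Fin m → Fin k → ℝ) ≃ₗ[ℝ] EuclideanSpace ℝ (Fin m × Fin k) where
  toFun x := WithLp.toLp 2 (fun p => x p.1 p.2)
  invFun v := fun i j => v (i, j)
  map_add' := fun _ _ => rfl
  map_smul' := fun _ _ => rfl
  left_inv := fun _ => rfl
  right_inv := fun _ => rfl

lemma lNorm_two {ι : Type*} [Fintype ι] (x : ι → ℝ) :
    lNorm 2 x = Real.sqrt (∑ i, (x i) ^ 2) := by
  have h2 : ((2 : ℝ≥0∞)) ≠ ∞ := by norm_num
  rw [lNorm, if_neg h2]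
  have ht : ((2 : ℝ≥0∞)).toReal = (2 : ℝ) := by norm_num
  rw [ht]
  rw [Real.sqrt_eq_rpow]
  congr 1
  refine Finset.sum_congr rfl fun i _ => ?_
  rw [show ((2:ℝ)) = ((2:ℕ):ℝ) by norm_num, Real.rpow_natCast]
  rw [sq_abs]

lemma mixedNorm_two {m k : ℕ} (x : Fin m → Fin k → ℝ) :
    mixedNorm 2 2 x = Real.sqrt (∑ j, ∑ i, (x i j) ^ 2) := by
  rw [mixedNorm]
  rw [show (fun j => lNorm 2 fun i => x i j)
    = fun j => Real.sqrt (∑ i, (x i j)^2) from funext fun j => lNorm_two _]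
  rw [lNorm_two]
  congr 1
  refine Finset.sum_congr rfl fun j _ => ?_
  rw [Real.sq_sqrt]
  positivity

lemma norm_toE {m k : ℕ} (x : Fin m → Fin k → ℝ) :
    ‖toE m k x‖ = Real.sqrt (∑ p : Fin m × Fin k, (x p.1 p.2) ^ 2) := by
  rw [EuclideanSpace.norm_eq]
  congr 1
  refine Finset.sum_congr rfl fun p _ => ?_
  rw [Real.norm_eq_abs, sq_abs]
  rfl

lemma mixedNorm_eq_norm_toE {m k : ℕ} (x : Fin m → Fin k → ℝ) :
    mixedNorm 2 2 x = ‖toE m k x‖ := by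
  rw [mixedNorm_two, norm_toE, Fintype.sum_prod_type]
  rw [Finset.sum_comm]

lemma inner_toE {m k : ℕ} (x : Fin m → Fin k → ℝ) (u : EuclideanSpace ℝ (Fin m × Fin k)) :
    ⟪toE m k x, u⟫ = ∑ i : Fin m, ∑ j : Fin k, x i j * u (i, j) := by
  rw [PiLp.inner_apply, Fintype.sum_prod_type]
  refine Finset.sum_congr rfl fun i _ => Finset.sum_congr rfl fun j _ => ?_
  rw [real_inner_eq_re_inner, RCLike.inner_apply, mul_comm]
  rfl


variable {E : Type*} [NormedAddCommGroup E] [InnerProductSpace ℝ E] [FiniteDimensional ℝ E]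

lemma proj_norm_sq (L : Submodule ℝ E) (v : E) :
    ‖(L.orthogonalProjectionOnto v : E)‖ ^ 2
      = ∑ t, ⟪((stdOrthonormalBasis ℝ L) t : E), v⟫ ^ 2 := by
  set b := stdOrthonormalBasis ℝ L
  have hproj : L.orthogonalProjectionOnto v = ∑ t, ⟪(b t : E), v⟫ • b t :=
    b.orthogonalProjectionOnto_apply_eq_sum v
  have hnorm : ‖(L.orthogonalProjectionOnto v : E)‖ = ‖L.orthogonalProjectionOnto v‖ := rfl
  rw [hnorm, ← real_inner_self_eq_norm_sq, hproj,
    b.orthonormal.inner_sum (fun t => ⟪(b t : E), v⟫) (fun t => ⟪(b t : E), v⟫) Finset.univ]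
  simp [sq]

lemma dist_sq_lower (L : Submodule ℝ E) (v y : E) (hy : y ∈ L) :
    ‖v‖ ^ 2 - ∑ t, ⟪((stdOrthonormalBasis ℝ L) t : E), v⟫ ^ 2 ≤ ‖v - y‖ ^ 2 := by
  rw [← proj_norm_sq]
  have hmin : ‖v - L.orthogonalProjectionOnto v‖ ≤ ‖v - y‖ := by
    rw [← Submodule.starProjection_apply, Submodule.starProjection_minimal]
    exact ciInf_le ⟨0, by rintro _ ⟨z, rfl⟩; positivity⟩ (⟨y, hy⟩ : L)
  have hpyth : ‖v‖ ^ 2 = ‖(L.orthogonalProjectionOnto v : E)‖ ^ 2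
      + ‖v - L.orthogonalProjectionOnto v‖ ^ 2 := by
    have := Submodule.norm_sq_eq_add_norm_sq_projection v L
    have hco : ((Lᗮ.orthogonalProjectionOnto v : E)) = v - L.orthogonalProjectionOnto v := by
      rw [Submodule.orthogonalProjectionOnto_orthogonal v]; rfl
    rw [this, ← hco]; simp [Submodule.coe_norm]
  have h2 : ‖v - L.orthogonalProjectionOnto v‖ ^ 2 ≤ ‖v - y‖ ^ 2 := by
    apply pow_le_pow_left₀ (norm_nonneg _) hmin
  linarith


def chiR (m r : ℕ) [NeZero m] (a i : Fin m) : ℝ :=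
  if ((i + a : Fin m) : ℕ) < r then 1 else 0

lemma chiR_mul_self (m r : ℕ) [NeZero m] (a i : Fin m) :
    chiR m r a i * chiR m r a i = chiR m r a i := by
  unfold chiR; split_ifs <;> norm_num

lemma sum_chiR_right {m r : ℕ} [NeZero m] (hr : r ≤ m) (i : Fin m) :
    ∑ a : Fin m, chiR m r a i = r := by
  have := perm_count hr (Equiv.addLeft i)
  simpa [chiR, Equiv.addLeft, add_comm] using this

lemma sum_chiR_left {m r : ℕ} [NeZero m] (hr : r ≤ m) (a : Fin m) :
    ∑ i : Fin m, chiR m r a i = r := by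
  have := perm_count hr (Equiv.addRight a)
  simpa [chiR, Equiv.addRight] using this

def gen (m k r l : ℕ) [NeZero m] [NeZero k] (a : Fin m) (b : Fin k)
    (ε₁ : Fin m → Bool) (ε₂ : Fin k → Bool) : Fin m → Fin k → ℝ :=
  fun i j => sgnB (ε₁ i) * sgnB (ε₂ j) *
    (if ((Equiv.addRight a i : Fin m) : ℕ) < r ∧ ((Equiv.addRight b j : Fin k) : ℕ) < l
      then 1 else 0)

lemma gen_apply (m k r l : ℕ) [NeZero m] [NeZero k] (a : Fin m) (b : Fin k)
    (ε₁ : Fin m → Bool) (ε₂ : Fin k → Bool) (i : Fin m) (j : Fin k) :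
    gen m k r l a b ε₁ ε₂ i j
      = sgnB (ε₁ i) * sgnB (ε₂ j) * (chiR m r a i * chiR k l b j) := by
  unfold gen chiR
  simp only [Equiv.coe_addRight]
  by_cases h1 : ((i + a : Fin m) : ℕ) < r <;> by_cases h2 : ((j + b : Fin k) : ℕ) < l <;>
    simp [h1, h2]

lemma gen_sq (m k r l : ℕ) [NeZero m] [NeZero k] (a : Fin m) (b : Fin k)
    (ε₁ : Fin m → Bool) (ε₂ : Fin k → Bool) (i : Fin m) (j : Fin k) :
    (gen m k r l a b ε₁ ε₂ i j) ^ 2 = chiR m r a i * chiR k l b j := by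
  rw [gen_apply]
  rw [mul_pow, mul_pow, sgnB_sq, sgnB_sq, mul_pow]
  rw [sq, chiR_mul_self, sq, chiR_mul_self]
  ring

lemma gen_norm_sq {m k r l : ℕ} [NeZero m] [NeZero k] (hrm : r ≤ m) (hlk : l ≤ k)
    (a : Fin m) (b : Fin k) (ε₁ : Fin m → Bool) (ε₂ : Fin k → Bool) :
    ∑ i : Fin m, ∑ j : Fin k, (gen m k r l a b ε₁ ε₂ i j) ^ 2 = (r : ℝ) * l := by
  have : ∀ i : Fin m, ∑ j : Fin k, (gen m k r l a b ε₁ ε₂ i j) ^ 2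
      = chiR m r a i * l := by
    intro i
    rw [Finset.sum_congr rfl fun j _ => gen_sq m k r l a b ε₁ ε₂ i j,
      ← Finset.mul_sum, sum_chiR_left hlk]
  rw [Finset.sum_congr rfl fun i _ => this i, ← Finset.sum_mul, sum_chiR_left hrm]

lemma sum_inner_sq_pair {m k r l : ℕ} [NeZero m] [NeZero k] (a : Fin m) (b : Fin k)
    (u : EuclideanSpace ℝ (Fin m × Fin k)) :
    ∑ ε₁ : Fin m → Bool, ∑ ε₂ : Fin k → Bool,
      ⟪toE m k (gen m k r l a b ε₁ ε₂), u⟫ ^ 2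
      = 2 ^ m * 2 ^ k * ∑ i : Fin m, ∑ j : Fin k,
          chiR m r a i * chiR k l b j * (u (i, j)) ^ 2 := by
  set d : Fin m → Fin k → ℝ := fun i j => chiR m r a i * chiR k l b j * u (i, j) with hd
  have hform : ∀ (ε₁ : Fin m → Bool) (ε₂ : Fin k → Bool),
      ⟪toE m k (gen m k r l a b ε₁ ε₂), u⟫
        = ∑ i, sgnB (ε₁ i) * (∑ j, sgnB (ε₂ j) * d i j) := by
    intro ε₁ ε₂
    rw [inner_toE]
    refine Finset.sum_congr rfl fun i _ => ?_
    rw [Finset.mul_sum]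
    refine Finset.sum_congr rfl fun j _ => ?_
    rw [gen_apply, hd]; ring
  calc ∑ ε₁ : Fin m → Bool, ∑ ε₂ : Fin k → Bool,
        ⟪toE m k (gen m k r l a b ε₁ ε₂), u⟫ ^ 2
      = ∑ ε₂ : Fin k → Bool, ∑ ε₁ : Fin m → Bool,
          (∑ i, sgnB (ε₁ i) * (∑ j, sgnB (ε₂ j) * d i j)) ^ 2 := by
        rw [Finset.sum_comm]
        exact Finset.sum_congr rfl fun ε₂ _ => Finset.sum_congr rfl fun ε₁ _ => by
          rw [hform]
    _ = ∑ ε₂ : Fin k → Bool, 2 ^ m * ∑ i, (∑ j, sgnB (ε₂ j) * d i j) ^ 2 := by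
        refine Finset.sum_congr rfl fun ε₂ _ => ?_
        rw [sum_sq_signs' (fun i => ∑ j, sgnB (ε₂ j) * d i j), Fintype.card_fin]
    _ = 2 ^ m * ∑ i, ∑ ε₂ : Fin k → Bool, (∑ j, sgnB (ε₂ j) * d i j) ^ 2 := by
        rw [← Finset.mul_sum, Finset.sum_comm]
    _ = 2 ^ m * ∑ i, 2 ^ k * ∑ j, (d i j) ^ 2 := by
        refine congrArg _ (Finset.sum_congr rfl fun i _ => ?_)
        rw [sum_sq_signs' (fun j => d i j), Fintype.card_fin]
    _ = 2 ^ m * 2 ^ k * ∑ i, ∑ j, chiR m r a i * chiR k l b j * (u (i, j)) ^ 2 := by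
        rw [← Finset.mul_sum, ← mul_assoc]
        refine congrArg _ (Finset.sum_congr rfl fun i _ => Finset.sum_congr rfl fun j _ => ?_)
        rw [hd]
        simp only [mul_pow]
        rw [sq, chiR_mul_self, sq, chiR_mul_self]

lemma sum_inner_sq_master {m k r l : ℕ} [NeZero m] [NeZero k] (hrm : r ≤ m) (hlk : l ≤ k)
    (u : EuclideanSpace ℝ (Fin m × Fin k)) :
    ∑ a : Fin m, ∑ b : Fin k, ∑ ε₁ : Fin m → Bool, ∑ ε₂ : Fin k → Bool,
      ⟪toE m k (gen m k r l a b ε₁ ε₂), u⟫ ^ 2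
      = 2 ^ m * 2 ^ k * ((r : ℝ) * l) * ∑ p : Fin m × Fin k, (u p) ^ 2 := by
  have step1 : ∀ a : Fin m, ∑ b : Fin k, ∑ ε₁ : Fin m → Bool, ∑ ε₂ : Fin k → Bool,
      ⟪toE m k (gen m k r l a b ε₁ ε₂), u⟫ ^ 2
      = 2 ^ m * 2 ^ k * ∑ i : Fin m, chiR m r a i * ((l : ℝ) * ∑ j, (u (i, j)) ^ 2) := by
    intro a
    rw [Finset.sum_congr rfl fun b _ => sum_inner_sq_pair a b u, ← Finset.mul_sum]
    congr 1
    calc ∑ b : Fin k, ∑ i : Fin m, ∑ j : Fin k, chiR m r a i * chiR k l b j * (u (i, j)) ^ 2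
        = ∑ i : Fin m, ∑ b : Fin k, ∑ j : Fin k, chiR m r a i * chiR k l b j * (u (i, j)) ^ 2 := by
          rw [Finset.sum_comm]
      _ = ∑ i : Fin m, ∑ j : Fin k, ∑ b : Fin k, chiR m r a i * chiR k l b j * (u (i, j)) ^ 2 :=
          Finset.sum_congr rfl fun i _ => by rw [Finset.sum_comm]
      _ = ∑ i : Fin m, chiR m r a i * ((l : ℝ) * ∑ j, (u (i, j)) ^ 2) := by
          refine Finset.sum_congr rfl fun i _ => ?_
          have hj : ∀ j : Fin k, ∑ b : Fin k, chiR m r a i * chiR k l b j * (u (i, j)) ^ 2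
              = chiR m r a i * (u (i, j)) ^ 2 * l := by
            intro j
            have hb : ∀ b : Fin k, chiR m r a i * chiR k l b j * (u (i, j)) ^ 2
                = chiR k l b j * (chiR m r a i * (u (i, j)) ^ 2) := fun b => by ring
            rw [Finset.sum_congr rfl fun b _ => hb b, ← Finset.sum_mul, sum_chiR_right hlk]
            ring
          rw [Finset.sum_congr rfl fun j _ => hj j, Finset.mul_sum, Finset.mul_sum]
          exact Finset.sum_congr rfl fun j _ => by ring
  rw [Finset.sum_congr rfl fun a _ => step1 a, ← Finset.mul_sum]
  rw [Fintype.sum_prod_type]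
  rw [mul_assoc ((2:ℝ)^m * 2^k)]
  congr 1
  calc ∑ a : Fin m, ∑ i : Fin m, chiR m r a i * ((l : ℝ) * ∑ j, (u (i, j)) ^ 2)
      = ∑ i : Fin m, ∑ a : Fin m, chiR m r a i * ((l : ℝ) * ∑ j, (u (i, j)) ^ 2) := by
        rw [Finset.sum_comm]
    _ = (r : ℝ) * l * ∑ i : Fin m, ∑ j, (u (i, j)) ^ 2 := by
        rw [Finset.mul_sum]
        refine Finset.sum_congr rfl fun i _ => ?_
        rw [← Finset.sum_mul, sum_chiR_right hrm]
        ring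


lemma swap4 {m k : ℕ} {T : Type*} [Fintype T]
    (f : Fin m → Fin k → (Fin m → Bool) → (Fin k → Bool) → T → ℝ) :
    ∑ a : Fin m, ∑ b : Fin k, ∑ ε₁ : Fin m → Bool, ∑ ε₂ : Fin k → Bool, ∑ t : T,
        f a b ε₁ ε₂ t
      = ∑ t : T, ∑ a : Fin m, ∑ b : Fin k, ∑ ε₁ : Fin m → Bool, ∑ ε₂ : Fin k → Bool,
        f a b ε₁ ε₂ t := by
  have h1 : ∀ a b ε₁, ∑ ε₂ : Fin k → Bool, ∑ t : T, f a b ε₁ ε₂ t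
      = ∑ t : T, ∑ ε₂ : Fin k → Bool, f a b ε₁ ε₂ t := fun a b ε₁ => Finset.sum_comm
  have h2 : ∀ a b, ∑ ε₁ : Fin m → Bool, ∑ t : T, ∑ ε₂ : Fin k → Bool, f a b ε₁ ε₂ t
      = ∑ t : T, ∑ ε₁ : Fin m → Bool, ∑ ε₂ : Fin k → Bool, f a b ε₁ ε₂ t :=
    fun a b => Finset.sum_comm
  have h3 : ∀ a, ∑ b : Fin k, ∑ t : T, ∑ ε₁ : Fin m → Bool, ∑ ε₂ : Fin k → Bool, f a b ε₁ ε₂ t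
      = ∑ t : T, ∑ b : Fin k, ∑ ε₁ : Fin m → Bool, ∑ ε₂ : Fin k → Bool, f a b ε₁ ε₂ t :=
    fun a => Finset.sum_comm
  calc ∑ a : Fin m, ∑ b : Fin k, ∑ ε₁ : Fin m → Bool, ∑ ε₂ : Fin k → Bool, ∑ t : T,
        f a b ε₁ ε₂ t
      = ∑ a : Fin m, ∑ b : Fin k, ∑ t : T, ∑ ε₁ : Fin m → Bool, ∑ ε₂ : Fin k → Bool,
          f a b ε₁ ε₂ t := by
        refine Finset.sum_congr rfl fun a _ => Finset.sum_congr rfl fun b _ => ?_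
        rw [Finset.sum_congr rfl fun ε₁ _ => h1 a b ε₁, h2 a b]
    _ = ∑ a : Fin m, ∑ t : T, ∑ b : Fin k, ∑ ε₁ : Fin m → Bool, ∑ ε₂ : Fin k → Bool,
          f a b ε₁ ε₂ t := Finset.sum_congr rfl fun a _ => h3 a
    _ = ∑ t : T, ∑ a : Fin m, ∑ b : Fin k, ∑ ε₁ : Fin m → Bool, ∑ ε₂ : Fin k → Bool,
          f a b ε₁ ε₂ t := Finset.sum_comm

lemma exists_far {m k r l n : ℕ} [NeZero m] [NeZero k] (hrm : r ≤ m) (hlk : l ≤ k)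
    (hn : 2 * n ≤ m * k)
    (L : Submodule ℝ (EuclideanSpace ℝ (Fin m × Fin k)))
    (hL : Module.finrank ℝ L ≤ n) :
    ∃ (a : Fin m) (b : Fin k) (ε₁ : Fin m → Bool) (ε₂ : Fin k → Bool),
      ∀ y ∈ L, Real.sqrt ((r : ℝ) * l / 2) ≤ ‖toE m k (gen m k r l a b ε₁ ε₂) - y‖ := by
  haveI : Nonempty (Fin m) := ⟨⟨0, Nat.pos_of_ne_zero (NeZero.ne m)⟩⟩
  haveI : Nonempty (Fin k) := ⟨⟨0, Nat.pos_of_ne_zero (NeZero.ne k)⟩⟩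
  have key : ∃ a b ε₁ ε₂,
      (∑ t, ⟪((stdOrthonormalBasis ℝ L) t : EuclideanSpace ℝ (Fin m × Fin k)),
        toE m k (gen m k r l a b ε₁ ε₂)⟫ ^ 2) ≤ (r : ℝ) * l / 2 := by
    by_contra hcon
    push_neg at hcon
    have hnorm_u : ∀ t, ∑ p : Fin m × Fin k,
        (((stdOrthonormalBasis ℝ L) t : EuclideanSpace ℝ (Fin m × Fin k)) p) ^ 2 = 1 := by
      intro t
      set w : EuclideanSpace ℝ (Fin m × Fin k) :=
        ((stdOrthonormalBasis ℝ L) t : EuclideanSpace ℝ (Fin m × Fin k)) with hw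
      have h1 : ‖w‖ = 1 := by
        have := (stdOrthonormalBasis ℝ L).orthonormal.1 t
        exact this
      have h2 : ⟪w, w⟫ = 1 := by rw [real_inner_self_eq_norm_sq, h1]; norm_num
      have h3 : ⟪w, w⟫ = ∑ p : Fin m × Fin k, (w p) ^ 2 := by
        rw [PiLp.inner_apply]
        exact Finset.sum_congr rfl fun p _ => by simp [RCLike.inner_apply, sq]
      rw [← h3, h2]
    have htot : ∑ a : Fin m, ∑ b : Fin k, ∑ ε₁ : Fin m → Bool, ∑ ε₂ : Fin k → Bool,
        ∑ t, ⟪((stdOrthonormalBasis ℝ L) t : EuclideanSpace ℝ (Fin m × Fin k)),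
          toE m k (gen m k r l a b ε₁ ε₂)⟫ ^ 2
        = (Module.finrank ℝ L : ℝ) * (2 ^ m * 2 ^ k * ((r : ℝ) * l)) := by
      rw [swap4]
      have hterm : ∀ t, ∑ a : Fin m, ∑ b : Fin k, ∑ ε₁ : Fin m → Bool, ∑ ε₂ : Fin k → Bool,
          ⟪((stdOrthonormalBasis ℝ L) t : EuclideanSpace ℝ (Fin m × Fin k)),
            toE m k (gen m k r l a b ε₁ ε₂)⟫ ^ 2
          = 2 ^ m * 2 ^ k * ((r : ℝ) * l) := by
        intro t
        have hcomm : ∀ a b ε₁ ε₂,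
            ⟪((stdOrthonormalBasis ℝ L) t : EuclideanSpace ℝ (Fin m × Fin k)),
              toE m k (gen m k r l a b ε₁ ε₂)⟫ ^ 2
            = ⟪toE m k (gen m k r l a b ε₁ ε₂),
              ((stdOrthonormalBasis ℝ L) t : EuclideanSpace ℝ (Fin m × Fin k))⟫ ^ 2 := by
          intro a b ε₁ ε₂; rw [real_inner_comm]
        calc ∑ a : Fin m, ∑ b : Fin k, ∑ ε₁ : Fin m → Bool, ∑ ε₂ : Fin k → Bool,
            ⟪((stdOrthonormalBasis ℝ L) t : EuclideanSpace ℝ (Fin m × Fin k)),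
              toE m k (gen m k r l a b ε₁ ε₂)⟫ ^ 2
            = ∑ a : Fin m, ∑ b : Fin k, ∑ ε₁ : Fin m → Bool, ∑ ε₂ : Fin k → Bool,
              ⟪toE m k (gen m k r l a b ε₁ ε₂),
                ((stdOrthonormalBasis ℝ L) t : EuclideanSpace ℝ (Fin m × Fin k))⟫ ^ 2 :=
            Finset.sum_congr rfl fun a _ => Finset.sum_congr rfl fun b _ =>
              Finset.sum_congr rfl fun ε₁ _ => Finset.sum_congr rfl fun ε₂ _ =>
                hcomm a b ε₁ ε₂
          _ = 2 ^ m * 2 ^ k * ((r : ℝ) * l) := by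
            rw [sum_inner_sq_master hrm hlk, hnorm_u t, mul_one]
      rw [Finset.sum_congr rfl fun t _ => hterm t, Finset.sum_const, Finset.card_univ,
        Fintype.card_fin, nsmul_eq_mul]
    have hlt : ∑ a : Fin m, ∑ b : Fin k, ∑ ε₁ : Fin m → Bool, ∑ ε₂ : Fin k → Bool,
        ((r : ℝ) * l / 2)
        < ∑ a : Fin m, ∑ b : Fin k, ∑ ε₁ : Fin m → Bool, ∑ ε₂ : Fin k → Bool,
        ∑ t, ⟪((stdOrthonormalBasis ℝ L) t : EuclideanSpace ℝ (Fin m × Fin k)),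
          toE m k (gen m k r l a b ε₁ ε₂)⟫ ^ 2 := by
      refine Finset.sum_lt_sum_of_nonempty Finset.univ_nonempty fun a _ => ?_
      refine Finset.sum_lt_sum_of_nonempty Finset.univ_nonempty fun b _ => ?_
      refine Finset.sum_lt_sum_of_nonempty Finset.univ_nonempty fun ε₁ _ => ?_
      refine Finset.sum_lt_sum_of_nonempty Finset.univ_nonempty fun ε₂ _ => ?_
      exact hcon a b ε₁ ε₂
    have hconst : ∑ a : Fin m, ∑ b : Fin k, ∑ ε₁ : Fin m → Bool, ∑ ε₂ : Fin k → Bool,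
        ((r : ℝ) * l / 2)
        = ((m : ℝ) * k * (2 ^ m * 2 ^ k)) * ((r : ℝ) * l / 2) := by
      simp only [Finset.sum_const, Finset.card_univ, Fintype.card_fun, Fintype.card_fin,
        Fintype.card_bool, nsmul_eq_mul]
      push_cast
      ring
    rw [hconst, htot] at hlt
    have hA : (0 : ℝ) < 2 ^ m * 2 ^ k := by positivity
    have hrl : (0 : ℝ) ≤ (r : ℝ) * l := by positivity
    have hNmk : (Module.finrank ℝ L : ℝ) * 2 ≤ (m : ℝ) * k := by
      have h' : 2 * Module.finrank ℝ L ≤ m * k :=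
        le_trans (Nat.mul_le_mul_left 2 hL) hn
      have h'' := (Nat.cast_le (α := ℝ)).2 h'
      push_cast at h''
      linarith
    have hmul := mul_le_mul_of_nonneg_right hNmk (mul_nonneg hA.le hrl)
    nlinarith [hmul]
  obtain ⟨a, b, ε₁, ε₂, hkey⟩ := key
  refine ⟨a, b, ε₁, ε₂, fun y hy => ?_⟩
  set v := toE m k (gen m k r l a b ε₁ ε₂) with hv
  have hnv : ‖v‖ ^ 2 = (r : ℝ) * l := by
    rw [hv, norm_toE, Real.sq_sqrt (by positivity)]
    rw [Fintype.sum_prod_type]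
    exact gen_norm_sq hrm hlk a b ε₁ ε₂
  have hlow := dist_sq_lower L v y hy
  rw [hnv] at hlow
  have h2 : (r : ℝ) * l / 2 ≤ ‖v - y‖ ^ 2 := by linarith
  calc Real.sqrt ((r : ℝ) * l / 2) ≤ Real.sqrt (‖v - y‖ ^ 2) := Real.sqrt_le_sqrt h2
    _ = ‖v - y‖ := Real.sqrt_sq (norm_nonneg _)


lemma gen_mem_Vset (m k r l : ℕ) [NeZero m] [NeZero k] (a : Fin m) (b : Fin k)
    (ε₁ : Fin m → Bool) (ε₂ : Fin k → Bool) :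
    gen m k r l a b ε₁ ε₂ ∈ Vset m k r l := by
  apply subset_convexHull
  exact ⟨Equiv.addRight a, Equiv.addRight b, fun i => sgnB (ε₁ i), fun j => sgnB (ε₂ j),
    fun i => sgnB_cases (ε₁ i), fun j => sgnB_cases (ε₂ j), rfl⟩

lemma mixedNorm_nonneg {m k : ℕ} (x : Fin m → Fin k → ℝ) : 0 ≤ mixedNorm 2 2 x := by
  rw [mixedNorm_two]; exact Real.sqrt_nonneg _

lemma Vset_norm_le {m k r l : ℕ} (hrm : r ≤ m) (hlk : l ≤ k) :
    ∀ x ∈ Vset m k r l, mixedNorm 2 2 x ≤ Real.sqrt ((r : ℝ) * l) := by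
  intro x hx
  have hsub : Vset m k r l ⊆ {z | mixedNorm 2 2 z ≤ Real.sqrt ((r : ℝ) * l)} := by
    apply convexHull_min
    · rintro y ⟨t₁, t₂, e₁, e₂, he₁, he₂, rfl⟩
      show mixedNorm 2 2 _ ≤ _
      rw [mixedNorm_two]
      apply Real.sqrt_le_sqrt
      have hsq : ∀ (i : Fin m) (j : Fin k),
          (e₁ i * e₂ j * (if (t₁ i : ℕ) < r ∧ (t₂ j : ℕ) < l then (1:ℝ) else 0)) ^ 2
          = (if (t₂ j : ℕ) < l then (1:ℝ) else 0) * (if (t₁ i : ℕ) < r then (1:ℝ) else 0) := by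
        intro i j
        have h1 : (e₁ i) ^ 2 = 1 := by rcases he₁ i with h | h <;> rw [h] <;> norm_num
        have h2 : (e₂ j) ^ 2 = 1 := by rcases he₂ j with h | h <;> rw [h] <;> norm_num
        rw [mul_pow, mul_pow, h1, h2]
        by_cases hp : (t₁ i : ℕ) < r <;> by_cases hq : (t₂ j : ℕ) < l <;>
          simp [hp, hq]
      have : ∑ j : Fin k, ∑ i : Fin m,
          (e₁ i * e₂ j * (if (t₁ i : ℕ) < r ∧ (t₂ j : ℕ) < l then (1:ℝ) else 0)) ^ 2
          = (r : ℝ) * l := by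
        rw [Finset.sum_congr rfl fun j _ => Finset.sum_congr rfl fun i _ => hsq i j]
        rw [Finset.sum_congr rfl fun j _ => by
          rw [← Finset.mul_sum, perm_count hrm t₁]]
        rw [← Finset.sum_mul, perm_count hlk t₂]
        ring
      rw [this]
    · have : {z : Fin m → Fin k → ℝ | mixedNorm 2 2 z ≤ Real.sqrt ((r : ℝ) * l)}
          = (toE m k) ⁻¹' (Metric.closedBall 0 (Real.sqrt ((r : ℝ) * l))) := by
        ext z
        simp [mixedNorm_eq_norm_toE, Metric.mem_closedBall, dist_zero_right]
      rw [this]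
      exact (convex_closedBall (0 : EuclideanSpace ℝ (Fin m × Fin k)) _).linear_preimage
        (toE m k).toLinearMap
  exact hsub hx

/-- There is an absolute constant `c > 0` such that for all `1 ≤ r ≤ m`, `1 ≤ l ≤ k`
and `0 ≤ n ≤ mk/2`, `d_n(V^{m,k}_{r,l}, l^{m,k}_{2,2}) ≥ c ⋅ r^{1/2} l^{1/2}`. -/
theorem statement4 :
    ∃ c : ℝ, 0 < c ∧
      ∀ (m k r l n : ℕ), 1 ≤ r → r ≤ m → 1 ≤ l → l ≤ k → 2 * n ≤ m * k →
        c * ((r : ℝ) ^ ((1 : ℝ) / 2) * (l : ℝ) ^ ((1 : ℝ) / 2)) ≤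
          kolWidth m k n (Vset m k r l) 2 2 := by
  refine ⟨1/2, by norm_num, ?_⟩
  intro m k r l n hr1 hrm hl1 hlk hn
  haveI : NeZero m := ⟨by omega⟩
  haveI : NeZero k := ⟨by omega⟩
  have hstep1 : (1/2 : ℝ) * ((r : ℝ) ^ ((1 : ℝ) / 2) * (l : ℝ) ^ ((1 : ℝ) / 2))
      ≤ Real.sqrt ((r : ℝ) * l / 2) := by
    rw [← Real.sqrt_eq_rpow, ← Real.sqrt_eq_rpow]
    have hr0 : (0:ℝ) ≤ (r:ℝ) := Nat.cast_nonneg r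
    have hl0 : (0:ℝ) ≤ (l:ℝ) := Nat.cast_nonneg l
    have hx0 : (0:ℝ) ≤ 1/2 * (Real.sqrt r * Real.sqrt l) := by positivity
    rw [Real.le_sqrt hx0 (by positivity)]
    rw [mul_pow, mul_pow, Real.sq_sqrt hr0, Real.sq_sqrt hl0]
    nlinarith [mul_nonneg hr0 hl0]
  unfold kolWidth
  haveI : Nonempty {L : Submodule ℝ (Fin m → Fin k → ℝ) // Module.finrank ℝ L ≤ n} :=
    ⟨⟨⊥, by simp⟩⟩
  apply le_ciInf
  rintro ⟨L, hL⟩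
  -- push L to Euclidean space
  set L' : Submodule ℝ (EuclideanSpace ℝ (Fin m × Fin k)) :=
    L.map ((toE m k : (Fin m → Fin k → ℝ) →ₗ[ℝ] EuclideanSpace ℝ (Fin m × Fin k))) with hL'
  have hL'rank : Module.finrank ℝ L' ≤ n := by
    rw [hL', LinearEquiv.finrank_map_eq (toE m k) L]; exact hL
  obtain ⟨a, b, ε₁, ε₂, hfar⟩ := exists_far hrm hlk hn L' hL'rank
  set x₀ := gen m k r l a b ε₁ ε₂ with hx₀
  have hx₀mem : x₀ ∈ Vset m k r l := gen_mem_Vset m k r l a b ε₁ ε₂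
  haveI : Nonempty L := ⟨0⟩
  have hinner : Real.sqrt ((r : ℝ) * l / 2)
      ≤ ⨅ y : L, mixedNorm 2 2 (x₀ - (y : Fin m → Fin k → ℝ)) := by
    apply le_ciInf
    intro y
    rw [mixedNorm_eq_norm_toE, map_sub]
    exact hfar (toE m k (y : Fin m → Fin k → ℝ))
      (Submodule.mem_map_of_mem y.2)
  have hbdd : BddAbove (Set.range fun x : Vset m k r l =>
      ⨅ y : L, mixedNorm 2 2 ((x : Fin m → Fin k → ℝ) - (y : Fin m → Fin k → ℝ))) := by
    refine ⟨Real.sqrt ((r : ℝ) * l), ?_⟩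
    rintro _ ⟨x, rfl⟩
    have hle : (⨅ y : L, mixedNorm 2 2 ((x : Fin m → Fin k → ℝ) - (y : Fin m → Fin k → ℝ)))
        ≤ mixedNorm 2 2 ((x : Fin m → Fin k → ℝ) - ((0 : L) : Fin m → Fin k → ℝ)) :=
      ciInf_le ⟨0, by rintro _ ⟨y, rfl⟩; exact mixedNorm_nonneg _⟩ (0 : L)
    calc (⨅ y : L, mixedNorm 2 2 ((x : Fin m → Fin k → ℝ) - (y : Fin m → Fin k → ℝ)))
        ≤ mixedNorm 2 2 ((x : Fin m → Fin k → ℝ) - ((0 : L) : Fin m → Fin k → ℝ)) := hle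
      _ = mixedNorm 2 2 (x : Fin m → Fin k → ℝ) := by norm_num
      _ ≤ Real.sqrt ((r : ℝ) * l) := Vset_norm_le hrm hlk _ x.2
  calc (1/2 : ℝ) * ((r : ℝ) ^ ((1 : ℝ) / 2) * (l : ℝ) ^ ((1 : ℝ) / 2))
      ≤ Real.sqrt ((r : ℝ) * l / 2) := hstep1
    _ ≤ ⨅ y : L, mixedNorm 2 2 (x₀ - (y : Fin m → Fin k → ℝ)) := hinner
    _ ≤ ⨆ x : Vset m k r l, ⨅ y : L,
          mixedNorm 2 2 ((x : Fin m → Fin k → ℝ) - (y : Fin m → Fin k → ℝ)) :=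
        le_ciSup hbdd ⟨x₀, hx₀mem⟩

end
end
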